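/- arXiv:2406.10919 — 7 statements merged into one kernel-verified Lean document; each statement's English description precedes it below -/
import Mathlib

section
/- Let α > 1 be a real number. The map π from the set of sequences of positive integers to (0,1] defined by π((d_i)) = ⟨d_i⟩_α is injective: if two sequences (d_i) and (g_i) of positive integers satisfy ⟨d_i⟩_α = ⟨g_i⟩_α, then d_i = g_i for all i. -/
/-- The α-expansion value ⟨d_i⟩_α = ∑_{i=1}^∞ (α-1)^{i-1} α^{-(d_1+⋯+d_i)},
with the digit sequence `d : ℕ → ℕ` indexed from 0 (so `d 0` is the first digit). -/
noncomputable def alphaExpansion (α : ℝ) (d : ℕ → ℕ) : ℝ :=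
  ∑' i : ℕ, (α - 1) ^ i * α ^ (-((∑ j ∈ Finset.range (i + 1), d j : ℕ) : ℤ))

/-!
Writing `σd` for the shifted sequence `i ↦ d (i + 1)`, splitting off the first summand gives
`⟨d⟩ * α ^ d 0 = 1 + (α - 1) * ⟨σd⟩`. Comparing with a geometric series shows `0 < ⟨σd⟩ ≤ 1`,
so `⟨d⟩ * α ^ d 0 ∈ (1, α]`, which pins down `d 0`; the identity then recovers `⟨σd⟩` from `⟨d⟩`,
and induction finishes the proof.
-/

open Finset Set

noncomputable def alphaTerm (α : ℝ) (d : ℕ → ℕ) (i : ℕ) : ℝ :=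
  (α - 1) ^ i * α⁻¹ ^ (∑ j ∈ range (i + 1), d j)

section

variable {α : ℝ} {d : ℕ → ℕ}

theorem alphaExpansion_eq_tsum_alphaTerm (α : ℝ) (d : ℕ → ℕ) :
    alphaExpansion α d = ∑' i, alphaTerm α d i := by
  simp only [alphaExpansion, alphaTerm, zpow_neg, zpow_natCast, inv_pow]

theorem alphaTerm_zero (α : ℝ) (d : ℕ → ℕ) : alphaTerm α d 0 = α⁻¹ ^ d 0 := by
  simp [alphaTerm]

theorem alphaTerm_succ (α : ℝ) (d : ℕ → ℕ) (i : ℕ) :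
    alphaTerm α d (i + 1) = α⁻¹ ^ d 0 * (α - 1) * alphaTerm α (fun j => d (j + 1)) i := by
  rw [alphaTerm, alphaTerm, sum_range_succ' _ (i + 1), pow_add, pow_succ]
  ring

theorem alphaTerm_nonneg (hα : 1 ≤ α) (d : ℕ → ℕ) (i : ℕ) : 0 ≤ alphaTerm α d i := by
  have hα₁ : 0 ≤ α - 1 := sub_nonneg.2 hα
  unfold alphaTerm
  positivity

theorem alphaTerm_le (hα : 1 ≤ α) (hd : ∀ i, 1 ≤ d i) (i : ℕ) :
    alphaTerm α d i ≤ α⁻¹ * (1 - α⁻¹) ^ i := by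
  have hα₀ : 0 < α := zero_lt_one.trans_le hα
  have hsum : i + 1 ≤ ∑ j ∈ range (i + 1), d j := by
    simpa using card_nsmul_le_sum (range (i + 1)) d 1 fun j _ => hd j
  calc alphaTerm α d i ≤ (α - 1) ^ i * α⁻¹ ^ (i + 1) := by
        unfold alphaTerm
        have := pow_le_pow_of_le_one (inv_pos.2 hα₀).le (inv_le_one_of_one_le₀ hα) hsum
        gcongr
    _ = α⁻¹ * (1 - α⁻¹) ^ i := by
        rw [show 1 - α⁻¹ = (α - 1) * α⁻¹ by field_simp, mul_pow, pow_succ]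
        ring

theorem hasSum_alphaTerm_majorant (hα : 1 ≤ α) : HasSum (fun i => α⁻¹ * (1 - α⁻¹) ^ i) 1 := by
  have hα₀ : 0 < α := zero_lt_one.trans_le hα
  have := (hasSum_geometric_of_lt_one (sub_nonneg.2 (inv_le_one_of_one_le₀ hα))
    (sub_lt_self 1 (inv_pos.2 hα₀))).mul_left α⁻¹
  rwa [sub_sub_cancel, inv_inv, inv_mul_cancel₀ hα₀.ne'] at this

theorem summable_alphaTerm (hα : 1 ≤ α) (hd : ∀ i, 1 ≤ d i) : Summable (alphaTerm α d) :=
  .of_nonneg_of_le (alphaTerm_nonneg hα d) (alphaTerm_le hα hd)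
    (hasSum_alphaTerm_majorant hα).summable

theorem alphaExpansion_pos (hα : 1 ≤ α) (hd : ∀ i, 1 ≤ d i) : 0 < alphaExpansion α d := by
  have hα₀ : 0 < α := zero_lt_one.trans_le hα
  rw [alphaExpansion_eq_tsum_alphaTerm]
  exact (summable_alphaTerm hα hd).tsum_pos (alphaTerm_nonneg hα d) 0
    (by rw [alphaTerm_zero]; positivity)

theorem alphaExpansion_le_one (hα : 1 ≤ α) (hd : ∀ i, 1 ≤ d i) : alphaExpansion α d ≤ 1 := by
  rw [alphaExpansion_eq_tsum_alphaTerm]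
  exact hasSum_le (alphaTerm_le hα hd) (summable_alphaTerm hα hd).hasSum
    (hasSum_alphaTerm_majorant hα)

theorem alphaExpansion_mul_pow_head (hα : 1 ≤ α) (hd : ∀ i, 1 ≤ d i) :
    alphaExpansion α d * α ^ d 0 = 1 + (α - 1) * alphaExpansion α (fun i => d (i + 1)) := by
  have hα₀ : α ≠ 0 := (zero_lt_one.trans_le hα).ne'
  rw [alphaExpansion_eq_tsum_alphaTerm, (summable_alphaTerm hα hd).tsum_eq_zero_add,
    alphaExpansion_eq_tsum_alphaTerm]
  simp only [alphaTerm_zero, alphaTerm_succ, tsum_mul_left]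
  have hcancel : α⁻¹ ^ d 0 * α ^ d 0 = 1 := by rw [inv_pow, inv_mul_cancel₀ (pow_ne_zero _ hα₀)]
  linear_combination (1 + (α - 1) * ∑' i, alphaTerm α (fun j => d (j + 1)) i) * hcancel

theorem alphaExpansion_mul_pow_head_mem_Ioc (hα : 1 < α) (hd : ∀ i, 1 ≤ d i) :
    alphaExpansion α d * α ^ d 0 ∈ Ioc 1 α := by
  have htail_pos := alphaExpansion_pos hα.le fun i => hd (i + 1)
  have htail_le := alphaExpansion_le_one hα.le fun i => hd (i + 1)
  rw [alphaExpansion_mul_pow_head hα.le hd]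
  constructor <;> nlinarith

end

theorem eq_of_mul_pow_mem_Ioc {x α : ℝ} (hα : 1 < α) {m n : ℕ}
    (hm : x * α ^ m ∈ Ioc 1 α) (hn : x * α ^ n ∈ Ioc 1 α) : m = n := by
  have no_lt : ∀ {m n : ℕ}, x * α ^ m ∈ Ioc 1 α → x * α ^ n ∈ Ioc 1 α → ¬m < n := by
    intro m n hm hn hmn
    have hx : 0 < x := pos_of_mul_pos_left (zero_lt_one.trans hm.1) (by positivity)
    refine lt_irrefl α ?_
    calc α < x * α ^ m * α := lt_mul_of_one_lt_left (by positivity) hm.1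
      _ = x * α ^ (m + 1) := by ring
      _ ≤ x * α ^ n := by gcongr; exacts [hα.le, hmn]
      _ ≤ α := hn.2
  exact le_antisymm (not_lt.1 (no_lt hn hm)) (not_lt.1 (no_lt hm hn))

theorem head_eq_and_tail_eq_of_alphaExpansion_eq {α : ℝ} (hα : 1 < α) {d g : ℕ → ℕ}
    (hd : ∀ i, 1 ≤ d i) (hg : ∀ i, 1 ≤ g i) (h : alphaExpansion α d = alphaExpansion α g) :
    d 0 = g 0 ∧
      alphaExpansion α (fun i => d (i + 1)) = alphaExpansion α (fun i => g (i + 1)) := by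
  have hhead : d 0 = g 0 := eq_of_mul_pow_mem_Ioc hα
    (h ▸ alphaExpansion_mul_pow_head_mem_Ioc hα hd) (alphaExpansion_mul_pow_head_mem_Ioc hα hg)
  refine ⟨hhead, mul_left_cancel₀ (sub_ne_zero.2 hα.ne') (add_left_cancel (a := 1) ?_)⟩
  rw [← alphaExpansion_mul_pow_head hα.le hd, ← alphaExpansion_mul_pow_head hα.le hg, h, hhead]

theorem alphaExpansion_injective (α : ℝ) (hα : 1 < α)
    (d g : ℕ → ℕ) (hd : ∀ i, 1 ≤ d i) (hg : ∀ i, 1 ≤ g i)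
    (h : alphaExpansion α d = alphaExpansion α g) :
    ∀ i, d i = g i := by
  intro i
  induction i generalizing d g with
  | zero => exact (head_eq_and_tail_eq_of_alphaExpansion_eq hα hd hg h).1
  | succ i ih =>
    exact ih _ _ (fun j => hd (j + 1)) (fun j => hg (j + 1))
      (head_eq_and_tail_eq_of_alphaExpansion_eq hα hd hg h).2
end

section
/- Let α > 1 be a real number. The map π from the set of sequences of positive integers to (0,1] defined by π((d_i)) = ⟨d_i⟩_α is surjective: every x ∈ (0,1] can be written as x = ⟨d_i⟩_α for some sequence (d_i)_{i≥1} of positive integers. -/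
/-!
Greedy expansion. For `x ∈ (0, 1]` let `d` be the least `n` with `α⁻ⁿ < x`; then `d ≥ 1` and
`x = α⁻ᵈ + (α - 1) α⁻ᵈ T x` with `T x = (x αᵈ - 1) / (α - 1) ∈ (0, 1]`. Iterating `T` and unrolling
this identity `k` times leaves the remainder `(α - 1)ᵏ α^(-(d₁ + ⋯ + dₖ)) Tᵏ x ≤ ((α - 1) / α)ᵏ`,
which tends to `0`.
-/

open Filter Finset Topology

theorem tendsto_sum_prod_mul_of_eq_add_mul {R : Type*} [NormedCommRing R] {y c r : ℕ → R}
    (hy : ∀ k, y k = c k + r k * y (k + 1))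
    (hprod : Tendsto (fun k => ∏ j ∈ range k, r j) atTop (𝓝 0))
    (hbdd : IsBoundedUnder (· ≤ ·) atTop (norm ∘ y)) :
    Tendsto (fun k => ∑ i ∈ range k, (∏ j ∈ range i, r j) * c i) atTop (𝓝 (y 0)) := by
  have unroll : ∀ k, y 0 = ∑ i ∈ range k, (∏ j ∈ range i, r j) * c i
      + (∏ j ∈ range k, r j) * y k := by
    intro k
    induction k with
    | zero => simp
    | succ k ih => rw [ih, hy k, sum_range_succ, prod_range_succ]; ring
  have hlim := (tendsto_const_nhds (x := y 0)).sub (hprod.zero_mul_isBoundedUnder_le hbdd)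
  rw [sub_zero] at hlim
  exact hlim.congr fun k => sub_eq_of_eq_add (unroll k)

theorem tendsto_prod_range_zero_of_le {r : ℕ → ℝ} {q : ℝ} (hr₀ : ∀ j, 0 ≤ r j)
    (hrq : ∀ j, r j ≤ q) (hq : q < 1) :
    Tendsto (fun k => ∏ j ∈ range k, r j) atTop (𝓝 0) := by
  have hq₀ : 0 ≤ q := (hr₀ 0).trans (hrq 0)
  refine squeeze_zero (fun k => prod_nonneg fun j _ => hr₀ j) (fun k => ?_)
    (tendsto_pow_atTop_nhds_zero_of_lt_one hq₀ hq)
  simpa using prod_le_prod (fun j _ => hr₀ j) (fun j _ => hrq j) (s := range k)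

theorem alphaExpansion_eq_tsum (α : ℝ) (d : ℕ → ℕ) :
    alphaExpansion α d = ∑' i, (∏ j ∈ range i, (α - 1) * α⁻¹ ^ d j) * α⁻¹ ^ d i := by
  refine tsum_congr fun i => ?_
  rw [prod_mul_distrib, prod_const, card_range, prod_pow_eq_pow_sum, zpow_neg, zpow_natCast,
    ← inv_pow, sum_range_succ, pow_add, mul_assoc]

open Classical in
noncomputable def greedyDigit (α x : ℝ) : ℕ :=
  if h : ∃ n : ℕ, 1 < x * α ^ n then Nat.find h else 0

noncomputable def greedyRemainder (α x : ℝ) : ℝ :=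
  (x * α ^ greedyDigit α x - 1) / (α - 1)

section Greedy

variable {α x : ℝ}

theorem exists_one_lt_mul_pow (hα : 1 < α) (hx : 0 < x) : ∃ n : ℕ, 1 < x * α ^ n := by
  obtain ⟨n, hn⟩ := pow_unbounded_of_one_lt x⁻¹ hα
  exact ⟨n, by rwa [← inv_mul_lt_iff₀ hx, mul_one]⟩

theorem one_lt_mul_pow_greedyDigit (hα : 1 < α) (hx : 0 < x) :
    1 < x * α ^ greedyDigit α x := by
  rw [greedyDigit, dif_pos (exists_one_lt_mul_pow hα hx)]
  exact Nat.find_spec (exists_one_lt_mul_pow hα hx)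

theorem one_le_greedyDigit (hα : 1 < α) (hx : x ∈ Set.Ioc 0 1) : 1 ≤ greedyDigit α x := by
  by_contra! h
  have := one_lt_mul_pow_greedyDigit hα hx.1
  rw [Nat.lt_one_iff.mp h, pow_zero, mul_one] at this
  exact this.not_ge hx.2

theorem mul_pow_greedyDigit_le (hα : 1 < α) (hx : x ∈ Set.Ioc 0 1) :
    x * α ^ greedyDigit α x ≤ α := by
  have hd := one_le_greedyDigit hα hx
  have hmin : x * α ^ (greedyDigit α x - 1) ≤ 1 := by
    have hlt : greedyDigit α x - 1 < greedyDigit α x := by omega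
    rw [greedyDigit, dif_pos (exists_one_lt_mul_pow hα hx.1)] at hlt ⊢
    exact not_lt.mp (Nat.find_min _ hlt)
  calc x * α ^ greedyDigit α x = x * α ^ (greedyDigit α x - 1) * α := by
        rw [mul_assoc, ← pow_succ, Nat.sub_add_cancel hd]
    _ ≤ 1 * α := by gcongr
    _ = α := one_mul α

theorem mapsTo_greedyRemainder (hα : 1 < α) :
    Set.MapsTo (greedyRemainder α) (Set.Ioc 0 1) (Set.Ioc 0 1) := by
  intro x hx
  have hlo := one_lt_mul_pow_greedyDigit hα hx.1
  have hhi := mul_pow_greedyDigit_le hα hx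
  have hα₁ : 0 < α - 1 := sub_pos.mpr hα
  exact ⟨div_pos (by linarith) hα₁, (div_le_one hα₁).mpr (by linarith)⟩

theorem eq_add_mul_greedyRemainder (hα₀ : α ≠ 0) (hα₁ : α ≠ 1) :
    x = α⁻¹ ^ greedyDigit α x + (α - 1) * α⁻¹ ^ greedyDigit α x * greedyRemainder α x := by
  have : α - 1 ≠ 0 := sub_ne_zero.mpr hα₁
  rw [greedyRemainder, mul_comm (α - 1), mul_assoc, mul_div_cancel₀ _ this, ← mul_one_add,
    add_sub_cancel, mul_left_comm, ← mul_pow, inv_mul_cancel₀ hα₀, one_pow, mul_one]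

theorem tendsto_prod_sub_one_mul_inv_pow {d : ℕ → ℕ} (hα : 1 < α) (hd : ∀ j, 1 ≤ d j) :
    Tendsto (fun k => ∏ j ∈ range k, (α - 1) * α⁻¹ ^ d j) atTop (𝓝 0) := by
  have hinv₀ : 0 ≤ α⁻¹ := inv_nonneg.mpr (by linarith)
  have hinv₁ : α⁻¹ ≤ 1 := inv_le_one_of_one_le₀ hα.le
  refine tendsto_prod_range_zero_of_le (q := (α - 1) * α⁻¹)
    (fun j => mul_nonneg (sub_nonneg.mpr hα.le) (pow_nonneg hinv₀ _))
    (fun j => mul_le_mul_of_nonneg_left (pow_le_of_le_one hinv₀ hinv₁ (by have := hd j; omega))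
      (sub_nonneg.mpr hα.le)) ?_
  rw [← div_eq_mul_inv, div_lt_one (by linarith)]
  linarith

end Greedy

theorem alphaExpansion_surjective (α : ℝ) (hα : 1 < α) :
    ∀ x ∈ Set.Ioc (0 : ℝ) 1,
      ∃ d : ℕ → ℕ, (∀ i, 1 ≤ d i) ∧ alphaExpansion α d = x := by
  intro x hx
  set y : ℕ → ℝ := fun k => (greedyRemainder α)^[k] x
  have hy : ∀ k, y k ∈ Set.Ioc 0 1 := fun k => (mapsTo_greedyRemainder hα).iterate k hx
  set d : ℕ → ℕ := fun k => greedyDigit α (y k)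
  have hd : ∀ k, 1 ≤ d k := fun k => one_le_greedyDigit hα (hy k)
  have hα₀ : 0 < α := by linarith
  have hterm : ∀ i, 0 ≤ (∏ j ∈ range i, (α - 1) * α⁻¹ ^ d j) * α⁻¹ ^ d i :=
    fun i => by positivity
  refine ⟨d, hd, ?_⟩
  rw [alphaExpansion_eq_tsum]
  refine ((hasSum_iff_tendsto_nat_of_nonneg hterm x).mpr ?_).tsum_eq
  refine tendsto_sum_prod_mul_of_eq_add_mul (y := y) (fun k => ?_)
    (tendsto_prod_sub_one_mul_inv_pow hα hd) (isBoundedUnder_of ⟨1, fun k => ?_⟩)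
  · simp only [y, Function.iterate_succ_apply']
    exact eq_add_mul_greedyRemainder hα₀.ne' hα.ne'
  · simpa [abs_of_pos (hy k).1] using (hy k).2
end

section
/- Let α > 1 be a real number and let T : (0,1] → (0,1] be the map defined by T(x) = (α^d x − 1)/(α − 1) for x ∈ (α^{-d}, α^{-(d-1)}] (d a positive integer). Then Lebesgue measure restricted to (0,1] is invariant under T: for every Borel set B ⊆ (0,1], the Lebesgue measure of T^{-1}(B) equals the Lebesgue measure of B. -/
open MeasureTheory

theorem lebesgue_invariant_under_T (α : ℝ) (hα : 1 < α) (T : ℝ → ℝ)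
    (hT : ∀ e : ℕ, 1 ≤ e →
      ∀ x ∈ Set.Ioc (α ^ (-(e : ℤ))) (α ^ (-(e : ℤ) + 1)),
        T x = (α ^ (e : ℤ) * x - 1) / (α - 1)) :
    ∀ B : Set ℝ, MeasurableSet B → B ⊆ Set.Ioc (0 : ℝ) 1 →
      volume (Set.Ioc (0 : ℝ) 1 ∩ T ⁻¹' B) = volume B := by
  intro B hB hBsub
  have hα0 : (0 : ℝ) < α := lt_trans one_pos hα
  have hα1 : (0 : ℝ) < α - 1 := sub_pos.mpr hα
  have hinv0 : (0 : ℝ) ≤ α⁻¹ := inv_nonneg.mpr hα0.le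
  have hinv1 : α⁻¹ < 1 := inv_lt_one_of_one_lt₀ hα
  -- interval endpoints
  set c : ℕ → ℝ := fun n => (α⁻¹) ^ n with hc
  have hcpos : ∀ n, 0 < c n := fun n => pow_pos (inv_pos.mpr hα0) n
  have hcle1 : ∀ n, c n ≤ 1 := fun n => pow_le_one₀ hinv0 hinv1.le
  have hcanti : ∀ {m n : ℕ}, m ≤ n → c n ≤ c m := fun h =>
    pow_le_pow_of_le_one hinv0 hinv1.le h
  -- the affine branch maps
  set f : ℕ → ℝ → ℝ := fun n x => (α ^ ((n : ℤ) + 1) * x - 1) / (α - 1) with hf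
  have hpow : ∀ n : ℕ, α ^ ((n : ℤ) + 1) = α ^ (n + 1) := by
    intro n
    rw [show ((n : ℤ) + 1) = ((n + 1 : ℕ) : ℤ) by push_cast; ring, zpow_natCast]
  have hpowpos : ∀ n : ℕ, (0 : ℝ) < α ^ (n + 1) := fun n => pow_pos hα0 _
  have hcinv : ∀ n : ℕ, c (n + 1) = (α ^ (n + 1))⁻¹ := by
    intro n; simp [hc, inv_pow]
  -- endpoints in the statement's form
  have hzpow1 : ∀ n : ℕ, α ^ (-((n + 1 : ℕ) : ℤ)) = c (n + 1) := by
    intro n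
    rw [zpow_neg, zpow_natCast, hcinv]
  have hzpow2 : ∀ n : ℕ, α ^ (-((n + 1 : ℕ) : ℤ) + 1) = c n := by
    intro n
    rw [show (-((n + 1 : ℕ) : ℤ) + 1) = -(n : ℤ) by push_cast; ring, zpow_neg, zpow_natCast]
    simp [hc, inv_pow]
  -- the pieces
  set P : ℕ → Set ℝ := fun n => (f n) ⁻¹' B with hP
  -- bounds : if f n x ∈ (0,1] then x ∈ Ioc (c (n+1)) (c n)
  have hbounds : ∀ (n : ℕ) (x : ℝ), 0 < f n x → f n x ≤ 1 →
      x ∈ Set.Ioc (c (n + 1)) (c n) := by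
    intro n x h0 h1
    rw [hf] at h0 h1
    simp only [hpow n] at h0 h1
    have hp := hpowpos n
    have h0' : 0 < α ^ (n + 1) * x - 1 := by
      by_contra h
      push_neg at h
      have := div_nonpos_of_nonpos_of_nonneg h hα1.le
      linarith
    have h1' : α ^ (n + 1) * x - 1 ≤ α - 1 := by
      have := (div_le_one hα1).mp h1
      linarith
    constructor
    · rw [hcinv]
      rw [inv_lt_iff_one_lt_mul₀ hp]
      nlinarith
    · have : α ^ (n + 1) * x ≤ α := by linarith
      have hx : x ≤ α / α ^ (n + 1) := by
        rw [le_div_iff₀ hp]; linarith [this]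
      calc x ≤ α / α ^ (n + 1) := hx
        _ = c n := by
          simp only [hc, inv_pow, pow_succ]
          rw [div_eq_iff (by positivity)]
          field_simp
  -- P n ⊆ Ioc (c (n+1)) (c n)
  have hPsub : ∀ n, P n ⊆ Set.Ioc (c (n + 1)) (c n) := by
    intro n x hx
    have hfx := hBsub hx
    exact hbounds n x hfx.1 hfx.2
  -- T agrees with f n on Ioc (c (n+1)) (c n)
  have hTf : ∀ (n : ℕ) (x : ℝ), x ∈ Set.Ioc (c (n + 1)) (c n) → T x = f n x := by
    intro n x hx
    have := hT (n + 1) (Nat.le_add_left 1 n) x (by rw [hzpow1, hzpow2]; exact hx)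
    rw [this, hf]
    rw [show (((n + 1 : ℕ)) : ℤ) = (n : ℤ) + 1 by push_cast; ring]
  -- covering : every x ∈ (0,1] lies in some Ioc (c (n+1)) (c n)
  have hcover : ∀ x : ℝ, x ∈ Set.Ioc (0 : ℝ) 1 → ∃ n, x ∈ Set.Ioc (c (n + 1)) (c n) := by
    intro x hx
    have hex : ∃ k, (α⁻¹) ^ k < x := exists_pow_lt_of_lt_one hx.1 hinv1
    classical
    let k := Nat.find hex
    have hk : (α⁻¹) ^ k < x := Nat.find_spec hex
    have hk0 : k ≠ 0 := by
      intro h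
      rw [h] at hk
      simp at hk
      linarith [hx.2]
    obtain ⟨m, hm⟩ : ∃ m, k = m + 1 := ⟨k - 1, (Nat.succ_pred_eq_of_pos (Nat.pos_of_ne_zero hk0)).symm⟩
    refine ⟨m, ?_, ?_⟩
    · rw [hc]; rw [hm] at hk; exact hk
    · rw [hc]
      by_contra h
      push_neg at h
      exact Nat.find_min hex (by omega : m < k) h
  -- the set identity
  have hset : Set.Ioc (0 : ℝ) 1 ∩ T ⁻¹' B = ⋃ n, P n := by
    ext x
    constructor
    · rintro ⟨hx1, hx2⟩
      obtain ⟨n, hn⟩ := hcover x hx1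
      refine Set.mem_iUnion.mpr ⟨n, ?_⟩
      rw [hP]
      simp only [Set.mem_preimage]
      rw [← hTf n x hn]
      exact hx2
    · intro hx
      obtain ⟨n, hn⟩ := Set.mem_iUnion.mp hx
      have hxI : x ∈ Set.Ioc (c (n + 1)) (c n) := hPsub n hn
      constructor
      · exact ⟨lt_of_le_of_lt (hcpos (n + 1)).le hxI.1, le_trans hxI.2 (hcle1 n)⟩
      · simp only [Set.mem_preimage]
        rw [hTf n x hxI]
        exact hn
  -- measurability of pieces
  have hfmeas : ∀ n, Measurable (f n) := by
    intro n
    rw [hf]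
    exact ((measurable_id.const_mul _).sub measurable_const).div_const _
  have hPmeas : ∀ n, MeasurableSet (P n) := fun n => hB.preimage (hfmeas n)
  -- pairwise disjoint
  have hdisj : Pairwise (Function.onFun Disjoint P) := by
    intro m n hmn
    have key : ∀ {a b : ℕ}, a < b →
        Disjoint (Set.Ioc (c (a + 1)) (c a)) (Set.Ioc (c (b + 1)) (c b)) := by
      intro a b hab
      rw [Set.Ioc_disjoint_Ioc]
      have h1 : c b ≤ c (a + 1) := hcanti hab
      calc min (c a) (c b) ≤ c b := min_le_right _ _
        _ ≤ c (a + 1) := h1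
        _ ≤ max (c (a + 1)) (c (b + 1)) := le_max_left _ _
    rcases lt_or_gt_of_ne hmn with h | h
    · exact Disjoint.mono (hPsub m) (hPsub n) (key h)
    · exact Disjoint.mono (hPsub m) (hPsub n) (key h).symm
  -- measure of each piece
  have hvol : ∀ n, volume (P n) = ENNReal.ofReal ((α - 1) * c (n + 1)) * volume B := by
    intro n
    have hdecomp : P n = (fun x => α ^ (n + 1) * x) ⁻¹'
        ((fun y => y + (-1)) ⁻¹' ((fun z => z * (α - 1)⁻¹) ⁻¹' B)) := by
      ext x
      simp [hP, hf, hpow n, Set.mem_preimage, div_eq_mul_inv, sub_eq_add_neg]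
    rw [hdecomp]
    rw [Real.volume_preimage_mul_left (ne_of_gt (hpowpos n)),
      measure_preimage_add_right,
      Real.volume_preimage_mul_right (inv_ne_zero (ne_of_gt hα1))]
    rw [← mul_assoc, ← ENNReal.ofReal_mul (abs_nonneg _)]
    congr 2
    rw [inv_inv, abs_of_pos (inv_pos.mpr (hpowpos n)), abs_of_pos hα1, hcinv]
    ring
  -- the geometric series
  have hsummable : Summable (fun n : ℕ => (α - 1) * c (n + 1)) := by
    apply Summable.mul_left
    exact ((summable_geometric_of_lt_one hinv0 hinv1).comp_injective
      (add_left_injective 1))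
  have hsum : ∑' n : ℕ, (α - 1) * c (n + 1) = 1 := by
    have h1 : ∀ n : ℕ, (α - 1) * c (n + 1) = ((α - 1) * α⁻¹) * (α⁻¹) ^ n := by
      intro n; simp only [hc]; rw [pow_succ]; ring
    rw [tsum_congr h1, tsum_mul_left, tsum_geometric_of_lt_one hinv0 hinv1]
    field_simp
  -- put everything together
  rw [hset, measure_iUnion hdisj hPmeas]
  calc ∑' n, volume (P n)
      = ∑' n, ENNReal.ofReal ((α - 1) * c (n + 1)) * volume B := by
        exact tsum_congr hvol
    _ = (∑' n, ENNReal.ofReal ((α - 1) * c (n + 1))) * volume B :=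
        ENNReal.tsum_mul_right
    _ = ENNReal.ofReal (∑' n, (α - 1) * c (n + 1)) * volume B := by
        rw [← ENNReal.ofReal_tsum_of_nonneg (fun n => mul_nonneg hα1.le (hcpos (n+1)).le) hsummable]
    _ = volume B := by rw [hsum, ENNReal.ofReal_one, one_mul]
end

section
/- Let α > 1 be a real number and let T : (0,1] → (0,1] be the map defined by T(x) = (α^d x − 1)/(α − 1) for x ∈ (α^{-d}, α^{-(d-1)}] (d a positive integer). Then Lebesgue measure restricted to (0,1] is ergodic with respect to T: it is T-invariant, and every Borel set B ⊆ (0,1] with T^{-1}(B) = B has Lebesgue measure 0 or 1. -/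
/-!
The inverse branches of `T` are the increasing affine maps
`ψₙ y = (α - 1) α^{-(n+1)} y + α^{-(n+1)}` of `(0,1]` onto the intervals `(α^{-(n+1)}, α^{-n}]`,
which tile `(0,1]`. Hence `(0,1] ∩ T⁻¹ B = ⋃ₙ ψₙ '' B` is a disjoint union of copies of `B` scaled
by slopes summing to `1`, and Lebesgue measure is invariant. An invariant `B` meets every cylinder
`I = ψ_{i₁} ∘ ⋯ ∘ ψ_{iₖ} '' (0,1]` in `ψ_{i₁} ∘ ⋯ ∘ ψ_{iₖ} '' B`, so `vol (B ∩ I) = vol I * vol B`.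
Two cylinders are nested or disjoint, and as the slopes sum to `1` they are all at most some
`r < 1`, so cylinders shrink geometrically and generate the Borel sets of `(0,1]`. Hence `vol|_B = vol B • vol|_(0,1]`,
and evaluating at `(0,1] \ B` gives `vol B * vol ((0,1] \ B) = 0`.
-/

open MeasureTheory Set Function

lemma volume_image_affine {a : ℝ} (ha : 0 ≤ a) (b : ℝ) (s : Set ℝ) :
    volume ((a * · + b) '' s) = ENNReal.ofReal a * volume s := by
  rw [← image_image (· + b) (a * ·), image_add_right, measure_preimage_add_right]
  change volume ((a • ·) '' s) = _
  rw [image_smul, Measure.addHaar_smul_of_nonneg volume ha]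
  simp

lemma measurableEmbedding_affine {a : ℝ} (ha : a ≠ 0) (b : ℝ) :
    MeasurableEmbedding (a * · + b) :=
  (measurableEmbedding_addRight b).comp (measurableEmbedding_mulLeft₀ ha)

variable {ι : Type*}

/-- `T` is a full-branch map of `(0,1]` with inverse branches `y ↦ c i * y + d i`. -/
structure IsAffineFullBranchMap (T : ℝ → ℝ) (c d : ι → ℝ) : Prop where
  slope_pos : ∀ i, 0 < c i
  pairwise_disjoint : Pairwise (Disjoint on fun i => (c i * · + d i) '' Ioc (0 : ℝ) 1)
  iUnion_image : ⋃ i, (c i * · + d i) '' Ioc (0 : ℝ) 1 = Ioc 0 1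
  apply_branch : ∀ i, ∀ y ∈ Ioc (0 : ℝ) 1, T (c i * y + d i) = y

def affineCylinder (c d : ι → ℝ) : List ι → Set ℝ
  | [] => Ioc 0 1
  | i :: w => (c i * · + d i) '' affineCylinder c d w

/-- Sets disjoint from `(0,1]` are thrown in so that the family generates the Borel sets of all
of `ℝ`; the measures compared below vanish on them. -/
def cylinderPiSystem (c d : ι → ℝ) : Set (Set ℝ) :=
  range (affineCylinder c d) ∪ {s | MeasurableSet s ∧ Disjoint s (Ioc 0 1)}

namespace IsAffineFullBranchMap

variable {T : ℝ → ℝ} {c d : ι → ℝ} (hT : IsAffineFullBranchMap T c d)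
include hT

lemma image_subset (i : ι) {A : Set ℝ} (hA : A ⊆ Ioc 0 1) :
    (c i * · + d i) '' A ⊆ Ioc 0 1 := by
  rw [← hT.iUnion_image]
  exact (image_mono hA).trans (subset_iUnion (fun i => (c i * · + d i) '' Ioc (0 : ℝ) 1) i)

lemma measurableSet_image (i : ι) {A : Set ℝ} (hA : MeasurableSet A) :
    MeasurableSet ((c i * · + d i) '' A) :=
  (measurableEmbedding_affine (hT.slope_pos i).ne' (d i)).measurableSet_image.2 hA

lemma inter_preimage_eq_iUnion {B : Set ℝ} (hB : B ⊆ Ioc 0 1) :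
    Ioc 0 1 ∩ T ⁻¹' B = ⋃ i, (c i * · + d i) '' B := by
  ext x
  simp only [mem_inter_iff, mem_preimage, mem_iUnion, mem_image]
  constructor
  · rintro ⟨hx, hTx⟩
    rw [← hT.iUnion_image] at hx
    obtain ⟨i, y, hy, rfl⟩ := mem_iUnion.1 hx
    exact ⟨i, y, by rwa [hT.apply_branch i y hy] at hTx, rfl⟩
  · rintro ⟨i, y, hy, rfl⟩
    exact ⟨hT.image_subset i hB (mem_image_of_mem _ hy), by rwa [hT.apply_branch i y (hB hy)]⟩

lemma affineCylinder_subset_Ioc (w : List ι) : affineCylinder c d w ⊆ Ioc 0 1 := by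
  induction w with
  | nil => exact subset_rfl
  | cons i w ih => exact hT.image_subset i ih

lemma measurableSet_affineCylinder (w : List ι) : MeasurableSet (affineCylinder c d w) := by
  induction w with
  | nil => exact measurableSet_Ioc
  | cons i w ih => exact hT.measurableSet_image i ih

lemma exists_length_eq_mem_affineCylinder {x : ℝ} (hx : x ∈ Ioc 0 1) (n : ℕ) :
    ∃ w : List ι, w.length = n ∧ x ∈ affineCylinder c d w := by
  induction n generalizing x with
  | zero => exact ⟨[], rfl, hx⟩
  | succ n ih =>
    rw [← hT.iUnion_image] at hx
    obtain ⟨i, y, hy, rfl⟩ := mem_iUnion.1 hx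
    obtain ⟨w, hw, hyw⟩ := ih hy
    exact ⟨i :: w, by rw [List.length_cons, hw], mem_image_of_mem _ hyw⟩

lemma exists_affineCylinder_eq_Ioc {r : ℝ} (hr : ∀ i, c i ≤ r) (w : List ι) :
    ∃ a b, affineCylinder c d w = Ioc a b ∧ b - a ≤ r ^ w.length := by
  induction w with
  | nil => exact ⟨0, 1, rfl, by simp⟩
  | cons i w ih =>
    obtain ⟨a, b, hw, hab⟩ := ih
    have hci := hT.slope_pos i
    refine ⟨c i * a + d i, c i * b + d i, by rw [affineCylinder, hw, image_affine_Ioc hci], ?_⟩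
    calc c i * b + d i - (c i * a + d i) = c i * (b - a) := by ring
      _ ≤ c i * r ^ w.length := mul_le_mul_of_nonneg_left hab hci.le
      _ ≤ r * r ^ w.length :=
        mul_le_mul_of_nonneg_right (hr i) (pow_nonneg (hci.le.trans (hr i)) _)
      _ = r ^ (i :: w).length := by rw [List.length_cons, pow_succ']

lemma affineCylinder_inter_mem_range {w v : List ι}
    (h : (affineCylinder c d w ∩ affineCylinder c d v).Nonempty) :
    affineCylinder c d w ∩ affineCylinder c d v ∈ range (affineCylinder c d) := by
  induction w generalizing v with
  | nil => exact ⟨v, (inter_eq_right.2 (hT.affineCylinder_subset_Ioc v)).symm⟩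
  | cons i w ih =>
    cases v with
    | nil => exact ⟨i :: w, (inter_eq_left.2 (hT.affineCylinder_subset_Ioc _)).symm⟩
    | cons j v =>
      obtain rfl : i = j := by
        by_contra hij
        exact h.not_disjoint <| (hT.pairwise_disjoint hij).mono
          (image_mono (hT.affineCylinder_subset_Ioc w))
          (image_mono (hT.affineCylinder_subset_Ioc v))
      have hinj : Injective (c i * · + d i) :=
        (measurableEmbedding_affine (hT.slope_pos i).ne' (d i)).injective
      simp only [affineCylinder, ← image_inter hinj] at h ⊢
      obtain ⟨u, hu⟩ := ih h.of_image
      exact ⟨i :: u, by rw [affineCylinder, hu]⟩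

lemma isPiSystem_cylinderPiSystem : IsPiSystem (cylinderPiSystem c d) := by
  rintro s (⟨w, rfl⟩ | ⟨hs, hsd⟩) t (⟨v, rfl⟩ | ⟨ht, htd⟩) hst
  · exact Or.inl (hT.affineCylinder_inter_mem_range hst)
  · exact Or.inr
      ⟨(hT.measurableSet_affineCylinder w).inter ht, htd.mono_left inter_subset_right⟩
  · exact Or.inr
      ⟨hs.inter (hT.measurableSet_affineCylinder v), hsd.mono_left inter_subset_left⟩
  · exact Or.inr ⟨hs.inter ht, hsd.mono_left inter_subset_left⟩

section Invariant

variable {B : Set ℝ} (hinv : Ioc 0 1 ∩ T ⁻¹' B = B)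
include hinv

lemma branch_mem_iff (i : ι) {y : ℝ} (hy : y ∈ Ioc 0 1) : c i * y + d i ∈ B ↔ y ∈ B := by
  have hx : c i * y + d i ∈ Ioc 0 1 := hT.image_subset i subset_rfl (mem_image_of_mem _ hy)
  calc c i * y + d i ∈ B ↔ c i * y + d i ∈ Ioc 0 1 ∩ T ⁻¹' B := by rw [hinv]
    _ ↔ y ∈ B := by rw [mem_inter_iff, mem_preimage, hT.apply_branch i y hy, and_iff_right hx]

lemma inter_image_eq_image_inter (i : ι) {A : Set ℝ} (hA : A ⊆ Ioc 0 1) :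
    B ∩ (c i * · + d i) '' A = (c i * · + d i) '' (B ∩ A) := by
  ext x
  constructor
  · rintro ⟨hxB, y, hy, rfl⟩
    exact ⟨y, ⟨(hT.branch_mem_iff hinv i (hA hy)).1 hxB, hy⟩, rfl⟩
  · rintro ⟨y, ⟨hyB, hy⟩, rfl⟩
    exact ⟨(hT.branch_mem_iff hinv i (hA hy)).2 hyB, mem_image_of_mem _ hy⟩

lemma volume_inter_affineCylinder (hB : B ⊆ Ioc 0 1) (w : List ι) :
    volume (B ∩ affineCylinder c d w) = volume (affineCylinder c d w) * volume B := by
  induction w with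
  | nil => simp [affineCylinder, inter_eq_left.2 hB]
  | cons i w ih =>
    rw [affineCylinder, hT.inter_image_eq_image_inter hinv i (hT.affineCylinder_subset_Ioc w),
      volume_image_affine (hT.slope_pos i).le, volume_image_affine (hT.slope_pos i).le, ih,
      mul_assoc]

end Invariant

variable [Countable ι]

lemma volume_iUnion_image {B : Set ℝ} (hBm : MeasurableSet B) (hB : B ⊆ Ioc 0 1) :
    volume (⋃ i, (c i * · + d i) '' B) = (∑' i, ENNReal.ofReal (c i)) * volume B := by
  have hdisj : Pairwise (Disjoint on fun i => (c i * · + d i) '' B) := fun i j hij =>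
    (hT.pairwise_disjoint hij).mono (image_mono hB) (image_mono hB)
  rw [measure_iUnion hdisj (hT.measurableSet_image · hBm), ← ENNReal.tsum_mul_right]
  exact tsum_congr fun i => volume_image_affine (hT.slope_pos i).le (d i) B

lemma tsum_slope : ∑' i, ENNReal.ofReal (c i) = 1 := by
  simpa [hT.iUnion_image] using (hT.volume_iUnion_image measurableSet_Ioc subset_rfl).symm

lemma volume_inter_preimage {B : Set ℝ} (hBm : MeasurableSet B) (hB : B ⊆ Ioc 0 1) :
    volume (Ioc 0 1 ∩ T ⁻¹' B) = volume B := by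
  rw [hT.inter_preimage_eq_iUnion hB, hT.volume_iUnion_image hBm hB, hT.tsum_slope, one_mul]

lemma slope_add_slope_le {i j : ι} (hij : i ≠ j) : c i + c j ≤ 1 := by
  classical
  have h := ENNReal.sum_le_tsum (f := fun i => ENNReal.ofReal (c i)) {i, j}
  rw [Finset.sum_pair hij, hT.tsum_slope,
    ← ENNReal.ofReal_add (hT.slope_pos i).le (hT.slope_pos j).le] at h
  exact ENNReal.ofReal_le_one.1 h

variable [Nontrivial ι]

lemma exists_slope_le : ∃ r < 1, ∀ i, c i ≤ r := by
  obtain ⟨i, j, hij⟩ := exists_pair_ne ι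
  refine ⟨max (1 - c i) (1 - c j), max_lt (by linarith [hT.slope_pos i])
    (by linarith [hT.slope_pos j]), fun k => ?_⟩
  rcases eq_or_ne k i with rfl | hki
  · exact le_max_of_le_right (by linarith [hT.slope_add_slope_le hij])
  · exact le_max_of_le_left (by linarith [hT.slope_add_slope_le hki])

lemma exists_mem_affineCylinder_subset {x : ℝ} (hx : x ∈ Ioc 0 1) {U : Set ℝ}
    (hU : U ∈ nhds x) : ∃ w, x ∈ affineCylinder c d w ∧ affineCylinder c d w ⊆ U := by
  obtain ⟨ε, hε, hball⟩ := Metric.mem_nhds_iff.1 hU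
  obtain ⟨r, hr1, hr⟩ := hT.exists_slope_le
  obtain ⟨n, hn⟩ := exists_pow_lt_of_lt_one hε hr1
  obtain ⟨w, rfl, hxw⟩ := hT.exists_length_eq_mem_affineCylinder hx n
  obtain ⟨a, b, hw, hab⟩ := hT.exists_affineCylinder_eq_Ioc hr w
  refine ⟨w, hxw, fun y hy => hball ?_⟩
  rw [hw] at hxw hy
  rw [Metric.mem_ball, Real.dist_eq, abs_lt]
  constructor <;> linarith [hxw.1, hxw.2, hy.1, hy.2]

lemma borel_eq_generateFrom_cylinderPiSystem :
    borel ℝ = MeasurableSpace.generateFrom (cylinderPiSystem c d) := by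
  refine le_antisymm (MeasurableSpace.generateFrom_le fun U (hU : IsOpen U) => ?_)
    (MeasurableSpace.generateFrom_le ?_)
  · have hcover :
        U = (U \ Ioc 0 1) ∪ ⋃ w ∈ {w | affineCylinder c d w ⊆ U}, affineCylinder c d w := by
      refine Subset.antisymm (fun x hx => ?_)
        (union_subset sdiff_subset (iUnion₂_subset fun _ => id))
      by_cases hx01 : x ∈ Ioc 0 1
      · obtain ⟨w, hxw, hwU⟩ := hT.exists_mem_affineCylinder_subset hx01 (hU.mem_nhds hx)
        exact Or.inr (mem_biUnion hwU hxw)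
      · exact Or.inl ⟨hx, hx01⟩
    rw [hcover]
    refine MeasurableSet.union (MeasurableSpace.measurableSet_generateFrom
      (Or.inr ⟨hU.measurableSet.diff measurableSet_Ioc, disjoint_sdiff_left⟩))
      (MeasurableSet.biUnion (to_countable _) fun w _ => ?_)
    exact MeasurableSpace.measurableSet_generateFrom (Or.inl ⟨w, rfl⟩)
  · rintro s (⟨w, rfl⟩ | ⟨hs, -⟩)
    exacts [hT.measurableSet_affineCylinder w, hs]

lemma restrict_eq_smul_restrict {B : Set ℝ} (hB : B ⊆ Ioc 0 1)
    (hinv : Ioc 0 1 ∩ T ⁻¹' B = B) :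
    volume.restrict B = volume B • volume.restrict (Ioc 0 1) := by
  have : IsFiniteMeasure (volume.restrict B) :=
    isFiniteMeasure_restrict.2 (measure_ne_top_of_subset hB (by simp))
  refine ext_of_generate_finite _ hT.borel_eq_generateFrom_cylinderPiSystem
    hT.isPiSystem_cylinderPiSystem ?_ (by simp)
  rintro s (⟨w, rfl⟩ | ⟨hs, hsd⟩)
  · rw [Measure.restrict_apply (hT.measurableSet_affineCylinder w), Measure.smul_apply,
      Measure.restrict_apply (hT.measurableSet_affineCylinder w),
      inter_eq_left.2 (hT.affineCylinder_subset_Ioc w), inter_comm,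
      hT.volume_inter_affineCylinder hinv hB, smul_eq_mul, mul_comm]
  · rw [Measure.restrict_apply hs, Measure.smul_apply, Measure.restrict_apply hs,
      hsd.inter_eq, (hsd.mono_right hB).inter_eq]
    simp

theorem volume_eq_zero_or_one {B : Set ℝ} (hBm : MeasurableSet B) (hB : B ⊆ Ioc 0 1)
    (hinv : Ioc 0 1 ∩ T ⁻¹' B = B) : volume B = 0 ∨ volume B = 1 := by
  have h := congrArg (· (Ioc 0 1 \ B)) (hT.restrict_eq_smul_restrict hB hinv)
  simp only [Measure.restrict_apply (measurableSet_Ioc.diff hBm), Measure.smul_apply,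
    smul_eq_mul, sdiff_inter_self, measure_empty, inter_eq_left.2 sdiff_subset] at h
  rcases mul_eq_zero.1 h.symm with h0 | h1
  · exact Or.inl h0
  · refine Or.inr (le_antisymm (by simpa using measure_mono (μ := volume) hB) ?_)
    have h := le_measure_sdiff (μ := volume) (s₁ := Ioc (0 : ℝ) 1) (s₂ := B)
    rwa [h1, nonpos_iff_eq_zero, tsub_eq_zero_iff_le, Real.volume_Ioc, sub_zero,
      ENNReal.ofReal_one] at h

end IsAffineFullBranchMap

lemma image_affine_Ioc_zero_one_eq_Ioc_inv_pow {α : ℝ} (hα : 1 < α) (n : ℕ) :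
    ((α - 1) / α ^ (n + 1) * · + (α ^ (n + 1))⁻¹) '' Ioc 0 1 =
      Ioc (α ^ (n + 1))⁻¹ (α ^ n)⁻¹ := by
  have hα0 : α ≠ 0 := by positivity
  rw [image_affine_Ioc (div_pos (by linarith) (by positivity))]
  congr 1
  · ring
  · field_simp
    ring

lemma isAffineFullBranchMap_of_eq_on_Ioc_zpow {α : ℝ} (hα : 1 < α) {T : ℝ → ℝ}
    (hT : ∀ e : ℕ, 1 ≤ e → ∀ x ∈ Ioc (α ^ (-(e : ℤ))) (α ^ (-(e : ℤ) + 1)),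
      T x = (α ^ (e : ℤ) * x - 1) / (α - 1)) :
    IsAffineFullBranchMap T (fun n : ℕ => (α - 1) / α ^ (n + 1))
      (fun n => (α ^ (n + 1))⁻¹) := by
  have hα0 : 0 < α := by linarith
  have hanti : Antitone fun n : ℕ => (α ^ n)⁻¹ := fun m n hmn =>
    inv_anti₀ (pow_pos hα0 m) (pow_le_pow_right₀ hα.le hmn)
  refine ⟨fun n => div_pos (by linarith) (by positivity), fun m n hmn => ?_, ?_,
    fun n y hy => ?_⟩
  · simp only [onFun, image_affine_Ioc_zero_one_eq_Ioc_inv_pow hα]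
    simpa [Order.succ_eq_add_one] using hanti.pairwise_disjoint_on_Ioc_succ hmn
  · simp only [image_affine_Ioc_zero_one_eq_Ioc_inv_pow hα]
    refine Subset.antisymm (iUnion_subset fun n => Ioc_subset_Ioc (by positivity)
      (inv_le_one_of_one_le₀ (one_le_pow₀ hα.le))) fun x hx => ?_
    obtain ⟨n, h1, h2⟩ := exists_nat_pow_near ((one_le_inv₀ hx.1).2 hx.2) hα
    exact mem_iUnion.2 ⟨n, (inv_lt_comm₀ hx.1 (pow_pos hα0 _)).1 h2,
      (le_inv_comm₀ (pow_pos hα0 _) hx.1).1 h1⟩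
  · have hmem : (α - 1) / α ^ (n + 1) * y + (α ^ (n + 1))⁻¹ ∈
        Ioc (α ^ (-((n + 1 : ℕ) : ℤ))) (α ^ (-((n + 1 : ℕ) : ℤ) + 1)) := by
      rw [show -((n + 1 : ℕ) : ℤ) + 1 = -(n : ℤ) by push_cast; ring, zpow_neg, zpow_neg,
        zpow_natCast, zpow_natCast, ← image_affine_Ioc_zero_one_eq_Ioc_inv_pow hα]
      exact mem_image_of_mem _ hy
    have hα1 : α - 1 ≠ 0 := sub_ne_zero.2 hα.ne'
    rw [hT (n + 1) (by omega) _ hmem, zpow_natCast]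
    field_simp
    ring

theorem lebesgue_ergodic_under_T (α : ℝ) (hα : 1 < α) (T : ℝ → ℝ)
    (hT : ∀ e : ℕ, 1 ≤ e →
      ∀ x ∈ Set.Ioc (α ^ (-(e : ℤ))) (α ^ (-(e : ℤ) + 1)),
        T x = (α ^ (e : ℤ) * x - 1) / (α - 1)) :
    (∀ B : Set ℝ, MeasurableSet B → B ⊆ Set.Ioc (0 : ℝ) 1 →
      volume (Set.Ioc (0 : ℝ) 1 ∩ T ⁻¹' B) = volume B) ∧
    (∀ B : Set ℝ, MeasurableSet B → B ⊆ Set.Ioc (0 : ℝ) 1 →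
      Set.Ioc (0 : ℝ) 1 ∩ T ⁻¹' B = B → volume B = 0 ∨ volume B = 1) := by
  have hT' := isAffineFullBranchMap_of_eq_on_Ioc_zpow hα hT
  exact ⟨fun B hBm hB => hT'.volume_inter_preimage hBm hB,
    fun B hBm hB hinv => hT'.volume_eq_zero_or_one hBm hB hinv⟩
end

section
/- Let α > 1 be a real number. For Lebesgue-almost all x ∈ (0,1], writing x = ⟨d_i⟩_α for its α-expansion, the frequency 𝔣_{d,α}(x) = lim_{n→∞} #{j ∈ {1,…,n} : d_j = d}/n exists and equals (α−1)/α^d for every positive integer d. -/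
/-!
Let `T x = (x α^{d(x)} - 1) / (α - 1)` be the shift, `d(x)` the first digit of `x`. On the cylinder
`{d = e}` the shift is affine with slope `α^e / (α - 1)` onto `(0,1]`, so Lebesgue measure `λ` on
`(0,1]` satisfies `λ(d = e, T ∈ B) = (α - 1) α^{-e} λ(B)`. Hence `λ` is `T`-invariant and the first
digit is independent of `T`, so the digits `d ∘ T^j` are pairwise independent and identically
distributed with `λ(d = e) = (α - 1) / α^e`, and the strong law of large numbers applies to the
indicators of `{d ∘ T^j = e}`. Finally, the digits read off `⟨d_i⟩_α` by iterating `T` are the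
`d_i`.
-/

open MeasureTheory Filter

open ProbabilityTheory Set

theorem ProbabilityTheory.IndepFun.comp_measurePreserving {Ω Ω' β γ : Type*}
    [MeasurableSpace Ω] [MeasurableSpace Ω'] [MeasurableSpace β] [MeasurableSpace γ]
    {μ : Measure Ω} {ν : Measure Ω'} {f : Ω' → β} {g : Ω' → γ} {T : Ω → Ω'}
    (hfg : IndepFun f g ν) (hT : MeasurePreserving T μ ν) (hf : Measurable f)
    (hg : Measurable g) : IndepFun (f ∘ T) (g ∘ T) μ := by
  rw [indepFun_iff_measure_inter_preimage_eq_mul] at hfg ⊢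
  intro s t hs ht
  simp only [preimage_comp, ← preimage_inter]
  rw [hT.measure_preimage ((hf hs).inter (hg ht)).nullMeasurableSet,
    hT.measure_preimage (hf hs).nullMeasurableSet, hT.measure_preimage (hg ht).nullMeasurableSet,
    hfg s t hs ht]

theorem MeasureTheory.MeasurePreserving.identDistrib_comp {Ω Ω' β : Type*}
    [MeasurableSpace Ω] [MeasurableSpace Ω'] [MeasurableSpace β]
    {μ : Measure Ω} {ν : Measure Ω'} {f : Ω' → β} {T : Ω → Ω'}
    (hT : MeasurePreserving T μ ν) (hf : Measurable f) : IdentDistrib (f ∘ T) f μ ν :=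
  ⟨(hf.comp hT.measurable).aemeasurable, hf.aemeasurable,
    by rw [← Measure.map_map hf hT.measurable, hT.map_eq]⟩

theorem ProbabilityTheory.ae_tendsto_card_filter_eq_div {Ω β : Type*} [MeasurableSpace Ω]
    [MeasurableSpace β] [MeasurableSingletonClass β] [DecidableEq β] {μ : Measure Ω}
    [IsFiniteMeasure μ] {X : ℕ → Ω → β} (hX : ∀ i, Measurable (X i))
    (hindep : Pairwise fun i j => IndepFun (X i) (X j) μ)
    (hident : ∀ i, IdentDistrib (X i) (X 0) μ μ) (b : β) :
    ∀ᵐ ω ∂μ, Tendsto (fun n : ℕ => (((Finset.range n).filter (fun j => X j ω = b)).card : ℝ) / n)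
      atTop (nhds (μ.real (X 0 ⁻¹' {b}))) := by
  let φ : β → ℝ := ({b} : Set β).indicator 1
  have hφ : Measurable φ := measurable_const.indicator (measurableSet_singleton b)
  have hφX : φ ∘ X 0 = (X 0 ⁻¹' {b}).indicator 1 := rfl
  have hslln := strong_law_ae_real (fun i => φ ∘ X i)
    (hφX ▸ (integrable_const 1).indicator ((hX 0) (measurableSet_singleton b)))
    (fun i j hij => (hindep hij).comp hφ hφ) (fun i => (hident i).comp hφ)
  rw [hφX, integral_indicator_one ((hX 0) (measurableSet_singleton b))] at hslln
  filter_upwards [hslln] with ω hω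
  convert hω using 3 with n
  simp only [φ, Function.comp_apply, indicator_apply, mem_singleton_iff, Pi.one_apply,
    Finset.sum_boole]

theorem Real.volume_preimage_mul_add {a : ℝ} (ha : a ≠ 0) (b : ℝ) (s : Set ℝ) :
    volume ((fun x => a * x + b) ⁻¹' s) = ENNReal.ofReal |a⁻¹| * volume s := by
  rw [show (fun x => a * x + b) ⁻¹' s = (a * ·) ⁻¹' ((· + b) ⁻¹' s) from rfl,
    Real.volume_preimage_mul_left ha, measure_preimage_add_right]

namespace AlphaExpansion

variable {α x : ℝ} {e : ℕ} {d : ℕ → ℕ}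

/-- For `0 < x ≤ 1`, the unique `e ≥ 1` with `α ^ (-e) < x ≤ α ^ (1 - e)`. -/
noncomputable def digit (α x : ℝ) : ℕ := ⌊1 - Real.logb α x⌋₊

noncomputable def branch (α : ℝ) (e : ℕ) (x : ℝ) : ℝ := (x * α ^ e - 1) / (α - 1)

noncomputable def shift (α x : ℝ) : ℝ := branch α (digit α x) x

noncomputable def digits (α x : ℝ) (n : ℕ) : ℕ := digit α ((shift α)^[n] x)

theorem measurable_digit (α : ℝ) : Measurable (digit α) :=
  (measurable_const.sub (Real.measurable_log.div_const _)).nat_floor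

theorem measurable_shift (α : ℝ) : Measurable (shift α) :=
  ((measurable_id.mul ((Measurable.of_discrete (f := (α ^ ·))).comp (measurable_digit α))).sub_const
    _).div_const _

theorem branch_mem_Ioc_iff (hα : 1 < α) :
    branch α e x ∈ Ioc 0 1 ↔ 1 < x * α ^ e ∧ x * α ^ e ≤ α := by
  have h : 0 < α - 1 := sub_pos.2 hα
  rw [branch, mem_Ioc, div_pos_iff_of_pos_right h, div_le_one h, sub_pos, sub_le_sub_iff_right]

theorem digit_eq_iff (hα : 1 < α) (hx : 0 < x) (he : e ≠ 0) :
    digit α x = e ↔ branch α e x ∈ Ioc 0 1 := by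
  have hlog : Real.logb α (x * α ^ e) = Real.logb α x + e := by
    rw [Real.logb_mul hx.ne' (by positivity), Real.logb_pow, Real.logb_self_eq_one hα, mul_one]
  have hxe : 0 < x * α ^ e := by positivity
  have hle : x * α ^ e ≤ α ↔ Real.logb α (x * α ^ e) ≤ 1 := by
    rw [Real.logb_le_iff_le_rpow hα hxe, Real.rpow_one]
  rw [digit, Nat.floor_eq_iff' he, branch_mem_Ioc_iff hα, ← Real.logb_pos_iff hα hxe, hle, hlog]
  constructor <;> rintro ⟨h₁, h₂⟩ <;> constructor <;> linarith

theorem digit_ne_zero (hα : 1 < α) (hx : x ∈ Ioc 0 1) : digit α x ≠ 0 := by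
  have : Real.logb α x ≤ 0 := Real.logb_nonpos hα hx.1.le hx.2
  rw [digit, ne_eq, Nat.floor_eq_zero, not_lt]
  linarith

theorem shift_mem_Ioc (hα : 1 < α) (hx : x ∈ Ioc 0 1) : shift α x ∈ Ioc 0 1 :=
  (digit_eq_iff hα hx.1 (digit_ne_zero hα hx)).1 rfl

theorem mem_Ioc_of_branch_mem_Ioc (hα : 1 < α) (he : e ≠ 0) (hx : branch α e x ∈ Ioc 0 1) :
    x ∈ Ioc 0 1 := by
  obtain ⟨h₁, h₂⟩ := (branch_mem_Ioc_iff hα).1 hx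
  have hαe : α ≤ α ^ e := le_self_pow₀ hα.le he
  constructor <;> nlinarith [pow_pos (zero_lt_one.trans hα) e]

theorem Ioc_inter_digit_preimage_inter_shift_preimage (hα : 1 < α) (he : e ≠ 0) (A : Set ℝ) :
    Ioc 0 1 ∩ digit α ⁻¹' {e} ∩ shift α ⁻¹' A = branch α e ⁻¹' (Ioc 0 1 ∩ A) := by
  ext x
  simp only [mem_inter_iff, mem_preimage, mem_singleton_iff]
  constructor
  · rintro ⟨⟨hx, rfl⟩, hA⟩
    exact ⟨shift_mem_Ioc hα hx, hA⟩
  · rintro ⟨hb, hA⟩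
    have hx := mem_Ioc_of_branch_mem_Ioc hα he hb
    have hd := (digit_eq_iff hα hx.1 he).2 hb
    exact ⟨⟨hx, hd⟩, by rwa [shift, hd]⟩

theorem volume_restrict_digit_preimage_singleton_inter_shift_preimage (hα : 1 < α) (he : e ≠ 0)
    (A : Set ℝ) :
    volume.restrict (Ioc (0 : ℝ) 1) (digit α ⁻¹' {e} ∩ shift α ⁻¹' A) =
      ENNReal.ofReal ((α - 1) / α ^ e) * volume.restrict (Ioc (0 : ℝ) 1) A := by
  have hα₁ : 0 < α - 1 := sub_pos.2 hα
  have haffine : branch α e = fun x => α ^ e / (α - 1) * x + -(α - 1)⁻¹ := by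
    ext x
    rw [branch]
    ring
  rw [Measure.restrict_apply' measurableSet_Ioc, Measure.restrict_apply' measurableSet_Ioc,
    inter_comm, ← inter_assoc, Ioc_inter_digit_preimage_inter_shift_preimage hα he, haffine,
    Real.volume_preimage_mul_add (by positivity), inv_div, abs_of_pos (by positivity), inter_comm]

theorem volume_restrict_digit_preimage_singleton (hα : 1 < α) (he : e ≠ 0) :
    volume.restrict (Ioc (0 : ℝ) 1) (digit α ⁻¹' {e}) = ENNReal.ofReal ((α - 1) / α ^ e) := by
  simpa using volume_restrict_digit_preimage_singleton_inter_shift_preimage hα he univ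

theorem volume_restrict_digit_preimage_zero (hα : 1 < α) :
    volume.restrict (Ioc (0 : ℝ) 1) (digit α ⁻¹' {0}) = 0 := by
  have hempty : digit α ⁻¹' {0} ∩ Ioc 0 1 = ∅ :=
    subset_empty_iff.1 fun x hx => digit_ne_zero hα hx.2 hx.1
  rw [Measure.restrict_apply' measurableSet_Ioc, hempty, measure_empty]

theorem volume_restrict_digit_preimage_inter_shift_preimage (hα : 1 < α) (s : Set ℕ)
    {B : Set ℝ} (hB : MeasurableSet B) :
    volume.restrict (Ioc (0 : ℝ) 1) (digit α ⁻¹' s ∩ shift α ⁻¹' B) =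
      volume.restrict (Ioc (0 : ℝ) 1) (digit α ⁻¹' s) * volume.restrict (Ioc (0 : ℝ) 1) B := by
  set μ := volume.restrict (Ioc (0 : ℝ) 1)
  have hsingleton (e : ℕ) :
      μ (digit α ⁻¹' {e} ∩ shift α ⁻¹' B) = μ (digit α ⁻¹' {e}) * μ B := by
    rcases eq_or_ne e 0 with rfl | he
    · rw [volume_restrict_digit_preimage_zero hα, zero_mul]
      exact measure_mono_null inter_subset_left (volume_restrict_digit_preimage_zero hα)
    · rw [volume_restrict_digit_preimage_singleton_inter_shift_preimage hα he,
        volume_restrict_digit_preimage_singleton hα he]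
  have hsum {C : Set ℝ} (hC : MeasurableSet C) :
      μ (digit α ⁻¹' s ∩ C) = ∑' e : s, μ (digit α ⁻¹' {(e : ℕ)} ∩ C) := by
    simp only [← Measure.restrict_apply' hC]
    exact (tsum_measure_preimage_singleton s.to_countable
      fun e _ => measurable_digit α (measurableSet_singleton e)).symm
  simpa only [hsum (measurable_shift α hB), hsingleton, ENNReal.tsum_mul_right, inter_univ]
    using (congrArg (· * μ B) (hsum MeasurableSet.univ)).symm

theorem measurePreserving_shift (hα : 1 < α) :
    MeasurePreserving (shift α) (volume.restrict (Ioc (0 : ℝ) 1))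
      (volume.restrict (Ioc (0 : ℝ) 1)) := by
  refine ⟨measurable_shift α, Measure.ext fun B hB => ?_⟩
  simpa [Measure.map_apply (measurable_shift α) hB] using
    volume_restrict_digit_preimage_inter_shift_preimage hα univ hB

theorem indepFun_digit_shift (hα : 1 < α) :
    IndepFun (digit α) (shift α) (volume.restrict (Ioc (0 : ℝ) 1)) := by
  rw [indepFun_iff_measure_inter_preimage_eq_mul]
  intro s B _ hB
  rw [volume_restrict_digit_preimage_inter_shift_preimage hα s hB,
    (measurePreserving_shift hα).measure_preimage hB.nullMeasurableSet]

theorem measurable_digits (α : ℝ) (n : ℕ) : Measurable fun x => digits α x n :=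
  (measurable_digit α).comp ((measurable_shift α).iterate n)

theorem identDistrib_digits (hα : 1 < α) (n : ℕ) :
    IdentDistrib (fun x => digits α x n) (digit α) (volume.restrict (Ioc (0 : ℝ) 1))
      (volume.restrict (Ioc (0 : ℝ) 1)) :=
  ((measurePreserving_shift hα).iterate n).identDistrib_comp (measurable_digit α)

theorem indepFun_digits (hα : 1 < α) {i j : ℕ} (hij : i ≠ j) :
    IndepFun (fun x => digits α x i) (fun x => digits α x j)
      (volume.restrict (Ioc (0 : ℝ) 1)) := by
  wlog hlt : i < j generalizing i j
  · exact (this hij.symm (hij.lt_or_gt.resolve_left hlt)).symm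
  obtain ⟨k, rfl⟩ := Nat.exists_eq_add_of_lt hlt
  have h₀ : IndepFun (digit α) (fun x => digits α (shift α x) k)
      (volume.restrict (Ioc (0 : ℝ) 1)) :=
    (indepFun_digit_shift hα).comp measurable_id (measurable_digits α k)
  have hshift : (fun x => digits α x (i + k + 1)) =
      (fun x => digits α (shift α x) k) ∘ (shift α)^[i] := by
    ext x
    rw [Function.comp_apply, digits, digits, ← Function.iterate_succ_apply,
      ← Function.iterate_add_apply]
    congr 2
    omega
  rw [hshift]
  exact h₀.comp_measurePreserving ((measurePreserving_shift hα).iterate i)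
    (measurable_digit α) ((measurable_digits α k).comp (measurable_shift α))

theorem ae_tendsto_digit_frequency (hα : 1 < α) {e : ℕ} (he : e ≠ 0) :
    ∀ᵐ x ∂volume.restrict (Ioc (0 : ℝ) 1),
      Tendsto (fun n : ℕ => (((Finset.range n).filter (fun j => digits α x j = e)).card : ℝ) / n)
        atTop (nhds ((α - 1) / α ^ e)) := by
  have h := ae_tendsto_card_filter_eq_div (measurable_digits α)
    (fun _ _ hij => indepFun_digits hα hij) (identDistrib_digits hα) e
  have hfreq : (volume.restrict (Ioc (0 : ℝ) 1)).real (digit α ⁻¹' {e}) = (α - 1) / α ^ e := by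
    rw [measureReal_def, volume_restrict_digit_preimage_singleton hα he,
      ENNReal.toReal_ofReal (div_nonneg (sub_pos.2 hα).le (by positivity))]
  exact hfreq ▸ h

theorem alphaExpansion_eq_tsum (α : ℝ) (d : ℕ → ℕ) :
    alphaExpansion α d = ∑' i, (α - 1) ^ i / α ^ (∑ j ∈ Finset.range (i + 1), d j) := by
  simp only [alphaExpansion, zpow_neg, zpow_natCast, div_eq_mul_inv]

theorem hasSum_sub_one_pow_div_pow_succ (hα : 1 < α) :
    HasSum (fun i : ℕ => (α - 1) ^ i / α ^ (i + 1)) 1 := by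
  have hα₀ : 0 < α := zero_lt_one.trans hα
  have h := (hasSum_geometric_of_lt_one (div_nonneg (sub_pos.2 hα).le hα₀.le)
    ((div_lt_one hα₀).2 (sub_lt_self α one_pos))).mul_right α⁻¹
  have hval : (1 - (α - 1) / α)⁻¹ * α⁻¹ = 1 := by
    field_simp
    ring
  have hterm : (fun i : ℕ => (α - 1) ^ i / α ^ (i + 1)) = fun i => ((α - 1) / α) ^ i * α⁻¹ := by
    ext i
    rw [div_pow, pow_succ]
    field_simp
  rw [hterm]
  rwa [hval] at h

theorem sub_one_pow_div_pow_sum_le (hα : 1 < α) (hd : ∀ i, 1 ≤ d i) (i : ℕ) :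
    (α - 1) ^ i / α ^ (∑ j ∈ Finset.range (i + 1), d j) ≤ (α - 1) ^ i / α ^ (i + 1) := by
  have hsum : i + 1 ≤ ∑ j ∈ Finset.range (i + 1), d j := by
    simpa using Finset.card_nsmul_le_sum (Finset.range (i + 1)) d 1 fun j _ => hd j
  gcongr
  exact hα.le

theorem summable_alphaExpansion (hα : 1 < α) (hd : ∀ i, 1 ≤ d i) :
    Summable fun i => (α - 1) ^ i / α ^ (∑ j ∈ Finset.range (i + 1), d j) :=
  (hasSum_sub_one_pow_div_pow_succ hα).summable.of_nonneg_of_le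
    (fun i => by have := sub_pos.2 hα; positivity) (sub_one_pow_div_pow_sum_le hα hd)

theorem alphaExpansion_mem_Ioc (hα : 1 < α) (hd : ∀ i, 1 ≤ d i) :
    alphaExpansion α d ∈ Ioc 0 1 := by
  have hnonneg (i : ℕ) : 0 ≤ (α - 1) ^ i / α ^ (∑ j ∈ Finset.range (i + 1), d j) := by
    have := sub_pos.2 hα
    positivity
  rw [alphaExpansion_eq_tsum]
  constructor
  · refine lt_of_lt_of_le ?_ ((summable_alphaExpansion hα hd).le_tsum 0 fun i _ => hnonneg i)
    have := zero_lt_one.trans hα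
    positivity
  · exact hasSum_le (sub_one_pow_div_pow_sum_le hα hd) (summable_alphaExpansion hα hd).hasSum
      (hasSum_sub_one_pow_div_pow_succ hα)

theorem alphaExpansion_mul_pow (hα : 1 < α) (hd : ∀ i, 1 ≤ d i) :
    alphaExpansion α d * α ^ d 0 = 1 + (α - 1) * alphaExpansion α (fun i => d (i + 1)) := by
  have hterm (i : ℕ) :
      (α - 1) ^ (i + 1) / α ^ (∑ j ∈ Finset.range (i + 1 + 1), d j) =
        (α - 1) / α ^ d 0 * ((α - 1) ^ i / α ^ (∑ j ∈ Finset.range (i + 1), d (j + 1))) := by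
    rw [Finset.sum_range_succ' d (i + 1), pow_succ, pow_add]
    field_simp
  rw [alphaExpansion_eq_tsum, alphaExpansion_eq_tsum,
    (summable_alphaExpansion hα hd).tsum_eq_zero_add, tsum_congr hterm,
    tsum_mul_left, zero_add, pow_zero, Finset.sum_range_one]
  field_simp

theorem branch_alphaExpansion (hα : 1 < α) (hd : ∀ i, 1 ≤ d i) :
    branch α (d 0) (alphaExpansion α d) = alphaExpansion α (fun i => d (i + 1)) := by
  rw [branch, alphaExpansion_mul_pow hα hd, add_sub_cancel_left,
    mul_div_cancel_left₀ _ (sub_pos.2 hα).ne']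

theorem digit_alphaExpansion (hα : 1 < α) (hd : ∀ i, 1 ≤ d i) :
    digit α (alphaExpansion α d) = d 0 :=
  (digit_eq_iff hα (alphaExpansion_mem_Ioc hα hd).1 (Nat.one_le_iff_ne_zero.1 (hd 0))).2
    (branch_alphaExpansion hα hd ▸ alphaExpansion_mem_Ioc hα fun i => hd (i + 1))

theorem shift_alphaExpansion (hα : 1 < α) (hd : ∀ i, 1 ≤ d i) :
    shift α (alphaExpansion α d) = alphaExpansion α (fun i => d (i + 1)) := by
  rw [shift, digit_alphaExpansion hα hd, branch_alphaExpansion hα hd]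

theorem digits_alphaExpansion (hα : 1 < α) (hd : ∀ i, 1 ≤ d i) :
    digits α (alphaExpansion α d) = d := by
  ext n
  induction n generalizing d with
  | zero => exact digit_alphaExpansion hα hd
  | succ n ih =>
    rw [digits, Function.iterate_succ_apply, shift_alphaExpansion hα hd]
    exact ih fun i => hd (i + 1)

end AlphaExpansion

theorem digit_frequency_ae_geometric (α : ℝ) (hα : 1 < α) :
    ∀ᵐ x ∂(volume.restrict (Set.Ioc (0 : ℝ) 1)),
      ∀ d : ℕ → ℕ, (∀ i, 1 ≤ d i) → alphaExpansion α d = x →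
        ∀ e : ℕ, 1 ≤ e →
          Tendsto
            (fun n : ℕ =>
              (((Finset.range n).filter (fun j => d j = e)).card : ℝ) / n)
            atTop (nhds ((α - 1) / α ^ e)) := by
  have hfreq : ∀ᵐ x ∂(volume.restrict (Set.Ioc (0 : ℝ) 1)), ∀ e : ℕ, e ≠ 0 →
      Tendsto (fun n : ℕ =>
          (((Finset.range n).filter (fun j => AlphaExpansion.digits α x j = e)).card : ℝ) / n)
        atTop (nhds ((α - 1) / α ^ e)) :=
    ae_all_iff.2 fun _ =>
      eventually_imp_distrib_left.2 (AlphaExpansion.ae_tendsto_digit_frequency hα)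
  filter_upwards [hfreq] with x hx d hd hdx e he
  rw [← hdx, AlphaExpansion.digits_alphaExpansion hα hd] at hx
  exact hx e (Nat.one_le_iff_ne_zero.1 he)
end

section
/- For every real number x > 1, the generalized Somos constant G(x) = ∏_{d=1}^∞ d^{(x−1)/x^d} satisfies G(x) = (x/(x−1)) · e^{−γ(1/x)/x}, where γ(t) = ∑_{i=1}^∞ t^{i−1} (1/i − log((i+1)/i)) is the generalized-Euler-constant function. -/
/-- The generalized-Euler-constant function
γ(t) = ∑_{i=1}^∞ t^{i-1} (1/i − log((i+1)/i)), indexed here by i = k+1, k : ℕ. -/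
noncomputable def genEulerGamma (t : ℝ) : ℝ :=
  ∑' k : ℕ, t ^ k * (1 / (k + 1 : ℝ) - Real.log ((k + 2 : ℝ) / (k + 1 : ℝ)))

lemma hasSum_congr_my {f g : ℕ → ℝ} {a : ℝ} (hf : HasSum f a) (h : ∀ k, f k = g k) :
    HasSum g a := (funext h : f = g) ▸ hf

lemma hasProd_congr_my {f g : ℕ → ℝ} {a : ℝ} (hf : HasProd f a) (h : ∀ k, f k = g k) :
    HasProd g a := (funext h : f = g) ▸ hf

theorem somos_function_formula (x : ℝ) (hx : 1 < x) :
    (∏' k : ℕ, ((k + 1 : ℝ)) ^ ((x - 1) / x ^ (k + 1))) =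
      x / (x - 1) * Real.exp (-(genEulerGamma (1 / x)) / x) := by
  have hx0 : (0:ℝ) < x := by linarith
  have hxne : x ≠ 0 := ne_of_gt hx0
  set t : ℝ := 1 / x with ht_def
  have ht0 : 0 < t := by positivity
  have htne : t ≠ 0 := ne_of_gt ht0
  have ht1 : t < 1 := by
    rw [ht_def, div_lt_one hx0]; linarith
  have htabs : |t| < 1 := by rw [abs_of_pos ht0]; exact ht1
  have hxt : x * t = 1 := by rw [ht_def]; field_simp
  -- summability of the two log series
  have hgeo : Summable (fun k : ℕ => ((k:ℝ) + 2) * t ^ (k + 1)) := by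
    have h0 : Summable (fun n : ℕ => (n:ℝ) ^ 1 * t ^ n) :=
      summable_pow_mul_geometric_of_norm_lt_one 1 (by rwa [Real.norm_eq_abs])
    have h1 : Summable (fun k : ℕ => ((k:ℝ) + 2) * t ^ (k + 2)) := by
      refine ((summable_nat_add_iff 2).mpr h0).congr fun k => ?_
      push_cast; ring
    refine (h1.mul_left (1 / t)).congr fun k => ?_
    rw [pow_succ]
    field_simp
  have hA : Summable (fun k : ℕ => t ^ (k + 1) * Real.log ((k:ℝ) + 2)) := by
    refine Summable.of_nonneg_of_le (fun k => ?_) (fun k => ?_) hgeo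
    · have hk : (0:ℝ) ≤ (k:ℝ) := Nat.cast_nonneg k
      exact mul_nonneg (by positivity) (Real.log_nonneg (by linarith))
    · rw [mul_comm]
      exact mul_le_mul_of_nonneg_right (Real.log_le_self (by positivity)) (by positivity)
  have hB : Summable (fun k : ℕ => t ^ (k + 1) * Real.log ((k:ℝ) + 1)) := by
    refine Summable.of_nonneg_of_le (fun k => ?_) (fun k => ?_) hgeo
    · have hk : (0:ℝ) ≤ (k:ℝ) := Nat.cast_nonneg k
      exact mul_nonneg (by positivity) (Real.log_nonneg (by linarith))
    · rw [mul_comm]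
      refine mul_le_mul_of_nonneg_right ?_ (by positivity)
      have hk : (0:ℝ) ≤ (k:ℝ) := Nat.cast_nonneg k
      exact (Real.log_le_self (by positivity)).trans (by linarith)
  set A : ℝ := ∑' k : ℕ, t ^ (k + 1) * Real.log ((k:ℝ) + 2) with hA_def
  set B : ℝ := ∑' k : ℕ, t ^ (k + 1) * Real.log ((k:ℝ) + 1) with hB_def
  -- shifted sum
  have hshift : HasSum (fun k : ℕ => t ^ k * Real.log ((k:ℝ) + 1)) A := by
    have h2 : HasSum (fun k : ℕ =>
        (fun n : ℕ => t ^ n * Real.log ((n:ℝ) + 1)) (k + 1)) A := by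
      refine hasSum_congr_my hA.hasSum fun k => ?_
      push_cast; ring_nf
    have h3 := (hasSum_nat_add_iff (f := fun n : ℕ => t ^ n * Real.log ((n:ℝ) + 1)) 1).mp h2
    simpa using h3
  -- log series
  have h1 : HasSum (fun k : ℕ => t ^ (k + 1) * (1 / ((k:ℝ) + 1))) (-Real.log (1 - t)) := by
    refine hasSum_congr_my (Real.hasSum_pow_div_log_of_abs_lt_one htabs) fun k => ?_
    rw [mul_one_div]
  -- pointwise identity for the exponents
  have hkey : ∀ k : ℕ, t ^ k - t ^ (k + 1) = (x - 1) / x ^ (k + 1) := by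
    intro k
    have hxk : (x:ℝ) ^ k ≠ 0 := pow_ne_zero _ hxne
    rw [ht_def, one_div, inv_pow, inv_pow, pow_succ]
    field_simp
  -- the exponent series for the product
  have hG : HasSum (fun k : ℕ => Real.log ((k:ℝ) + 1) * ((x - 1) / x ^ (k + 1))) (A - B) := by
    refine hasSum_congr_my (hshift.sub hB.hasSum) fun k => ?_
    rw [← hkey k]; ring
  -- the product equals exp (A - B)
  have hprod : HasProd (fun k : ℕ => ((k:ℝ) + 1) ^ ((x - 1) / x ^ (k + 1))) (Real.exp (A - B)) := by
    refine hasProd_congr_my hG.rexp fun k => ?_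
    simp only [Function.comp_apply]
    rw [Real.rpow_def_of_pos (by positivity)]
  -- the gamma series times t
  have hγt : HasSum (fun k : ℕ => t ^ (k + 1) *
      (1 / ((k:ℝ) + 1) - Real.log (((k:ℝ) + 2) / ((k:ℝ) + 1))))
      (-Real.log (1 - t) - (A - B)) := by
    refine hasSum_congr_my (h1.sub (hA.hasSum.sub hB.hasSum)) fun k => ?_
    have hk1 : ((k:ℝ) + 2) ≠ 0 := by positivity
    have hk2 : ((k:ℝ) + 1) ≠ 0 := by positivity
    rw [Real.log_div hk1 hk2]
    ring
  have hγ : genEulerGamma t = (1 / t) * (-Real.log (1 - t) - (A - B)) := by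
    rw [genEulerGamma]
    refine HasSum.tsum_eq ?_
    refine hasSum_congr_my (hγt.mul_left (1 / t)) fun k => ?_
    rw [pow_succ]
    field_simp
  -- finish
  rw [hprod.tprod_eq]
  have h1t : (0:ℝ) < 1 - t := by linarith
  have hexp : -(genEulerGamma t) / x = (A - B) + Real.log (1 - t) := by
    have h2 : -(genEulerGamma t) / x
        = -(-Real.log (1 - t) - (A - B)) * ((1 / t) * (1 / x)) := by
      rw [hγ]; ring
    have h3 : (1 / t) * (1 / x) = 1 := by
      rw [div_mul_div_comm, one_mul, mul_comm, hxt]; norm_num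
    rw [h2, h3]; ring
  have h1t' : 1 - t = (x - 1) / x := by rw [ht_def]; field_simp
  rw [hexp, Real.exp_add, Real.exp_log h1t, h1t']
  have hx1 : x - 1 ≠ 0 := by intro h; linarith [sub_eq_zero.mp h]
  field_simp
end

section
/- Let α > 1 be a real number. The set of x ∈ (0,1] whose α-expansion digit sequence (d_i) is bounded has Lebesgue measure zero but Hausdorff dimension one. -/
/-!
Digit `k` of an α-expansion acts on `[0, 1]` by the affine map `y ↦ α⁻ᵏ + (α - 1) α⁻ᵏ y`,
whose image, of length `r k = (α - 1) α⁻ᵏ`, is `[α⁻ᵏ, α¹⁻ᵏ]`. The points with digits in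
`[1, M]` form a self-similar set `E_M` with ratios summing to `1 - α⁻ᴹ < 1`, so `E_M` is null,
and the bounded-digit set is the countable union of the `E_M`.

For the dimension, given `s < 1` pick `M` with `∑_{k ≤ M} r k ^ s ≥ 1`. Recoding the points of
`E_M` with the digit maps of ratios `p k ∝ r k ^ s` laid side by side on `[0, 1]` maps `E_M`
onto `[0, 1)`. Points of `E_M` whose addresses first differ at depth `n` are at distance at
least a constant times the `n`-cylinder length `∏ r`, while their images are at distance at
most `∏ p ≤ (∏ r) ^ s`; so the recoding is `s`-Hölder on `E_M` and `dim E_M ≥ s`.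
-/

open MeasureTheory

open Finset
open scoped NNReal ENNReal Pointwise

/- Digit `k` acts by the affine map `f k y = q k + r k * y`; `MapsUnitInterval r q k` says that
`f k` maps `[0, 1]` into itself preserving orientation, and `codingValue r q d` is the point with
address `d`, the limit of `f (d 0) (f (d 1) (⋯ (f (d n) 0)))`. -/
def MapsUnitInterval (r q : ℕ → ℝ) (k : ℕ) : Prop :=
  0 ≤ r k ∧ 0 ≤ q k ∧ q k + r k ≤ 1

noncomputable def codingTerm (r q : ℕ → ℝ) (d : ℕ → ℕ) (i : ℕ) : ℝ :=
  (∏ j ∈ range i, r (d j)) * q (d i)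

noncomputable def codingValue (r q : ℕ → ℝ) (d : ℕ → ℕ) : ℝ :=
  ∑' i, codingTerm r q d i

section Coding

variable {r q : ℕ → ℝ} {d d' : ℕ → ℕ}

theorem codingTerm_nonneg (hd : ∀ i, MapsUnitInterval r q (d i)) (i : ℕ) :
    0 ≤ codingTerm r q d i :=
  mul_nonneg (prod_nonneg fun j _ => (hd j).1) (hd i).2.1

theorem sum_codingTerm_le (hd : ∀ i, MapsUnitInterval r q (d i)) (n : ℕ) :
    ∑ i ∈ range n, codingTerm r q d i ≤ 1 - ∏ j ∈ range n, r (d j) := by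
  have telescope (i : ℕ) :
      codingTerm r q d i ≤ ∏ j ∈ range i, r (d j) - ∏ j ∈ range (i + 1), r (d j) := by
    rw [prod_range_succ, codingTerm]
    nlinarith [prod_nonneg fun j (_ : j ∈ range i) => (hd j).1, (hd i).2.2]
  calc ∑ i ∈ range n, codingTerm r q d i
      ≤ ∑ i ∈ range n, (∏ j ∈ range i, r (d j) - ∏ j ∈ range (i + 1), r (d j)) :=
        sum_le_sum fun i _ => telescope i
    _ = 1 - ∏ j ∈ range n, r (d j) := by rw [sum_range_sub', prod_range_zero]

theorem sum_codingTerm_le_one (hd : ∀ i, MapsUnitInterval r q (d i)) (n : ℕ) :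
    ∑ i ∈ range n, codingTerm r q d i ≤ 1 :=
  (sum_codingTerm_le hd n).trans (sub_le_self _ (prod_nonneg fun j _ => (hd j).1))

theorem summable_codingTerm (hd : ∀ i, MapsUnitInterval r q (d i)) :
    Summable (codingTerm r q d) :=
  summable_of_sum_range_le (codingTerm_nonneg hd) (sum_codingTerm_le_one hd)

theorem codingValue_mem_Icc (hd : ∀ i, MapsUnitInterval r q (d i)) :
    codingValue r q d ∈ Set.Icc 0 1 :=
  ⟨tsum_nonneg (codingTerm_nonneg hd),
    (summable_codingTerm hd).tsum_le_of_sum_range_le (sum_codingTerm_le_one hd)⟩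

theorem codingTerm_add (d : ℕ → ℕ) (n i : ℕ) :
    codingTerm r q d (i + n) =
      (∏ j ∈ range n, r (d j)) * codingTerm r q (fun i => d (i + n)) i := by
  rw [codingTerm, codingTerm, add_comm i n, prod_range_add, mul_assoc]
  simp only [add_comm n]

theorem codingValue_eq_add (hd : ∀ i, MapsUnitInterval r q (d i)) (n : ℕ) :
    codingValue r q d = ∑ i ∈ range n, codingTerm r q d i
      + (∏ j ∈ range n, r (d j)) * codingValue r q (fun i => d (i + n)) := by
  rw [codingValue, ← (summable_codingTerm hd).sum_add_tsum_nat_add n, codingValue,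
    ← tsum_mul_left]
  simp only [codingTerm_add]

theorem codingValue_eq_cons (hd : ∀ i, MapsUnitInterval r q (d i)) :
    codingValue r q d = q (d 0) + r (d 0) * codingValue r q (fun i => d (i + 1)) := by
  simpa [codingTerm] using codingValue_eq_add hd 1

theorem codingValue_sub_eq (hd : ∀ i, MapsUnitInterval r q (d i))
    (hd' : ∀ i, MapsUnitInterval r q (d' i)) {n : ℕ} (h : ∀ j < n, d j = d' j) :
    codingValue r q d - codingValue r q d' = (∏ j ∈ range n, r (d j)) *
      (codingValue r q (fun i => d (i + n)) - codingValue r q (fun i => d' (i + n))) := by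
  have hprod {m : ℕ} (hm : m ≤ n) : ∏ j ∈ range m, r (d j) = ∏ j ∈ range m, r (d' j) :=
    prod_congr rfl fun j hj => by rw [h j (by have := mem_range.1 hj; omega)]
  have hsum : ∑ i ∈ range n, codingTerm r q d i = ∑ i ∈ range n, codingTerm r q d' i :=
    sum_congr rfl fun i hi => by
      rw [codingTerm, codingTerm, hprod (mem_range.1 hi).le, h i (mem_range.1 hi)]
  rw [codingValue_eq_add hd n, codingValue_eq_add hd' n, hsum, hprod le_rfl]
  ring

theorem abs_codingValue_sub_le (hd : ∀ i, MapsUnitInterval r q (d i))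
    (hd' : ∀ i, MapsUnitInterval r q (d' i)) {n : ℕ} (h : ∀ j < n, d j = d' j) :
    |codingValue r q d - codingValue r q d'| ≤ ∏ j ∈ range n, r (d j) := by
  have hR : 0 ≤ ∏ j ∈ range n, r (d j) := prod_nonneg fun j _ => (hd j).1
  obtain ⟨h0, h1⟩ := codingValue_mem_Icc fun i => hd (i + n)
  obtain ⟨h0', h1'⟩ := codingValue_mem_Icc fun i => hd' (i + n)
  rw [codingValue_sub_eq hd hd' h, abs_mul, abs_of_nonneg hR]
  exact mul_le_of_le_one_right hR (abs_sub_le_of_nonneg_of_le h0 h1 h0' h1')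

theorem codingValue_eq_of_forall_eq_add {c y : ℝ} {z : ℕ → ℝ}
    (hd : ∀ i, MapsUnitInterval r q (d i)) (hc : ∀ i, r (d i) ≤ c) (hc1 : c < 1)
    (hz : ∀ n, z n ∈ Set.Icc 0 1)
    (hy : ∀ n, y = ∑ i ∈ range n, codingTerm r q d i + (∏ j ∈ range n, r (d j)) * z n) :
    codingValue r q d = y := by
  have hclose (n : ℕ) : |codingValue r q d - y| ≤ c ^ n := by
    have hR : 0 ≤ ∏ j ∈ range n, r (d j) := prod_nonneg fun j _ => (hd j).1
    obtain ⟨h0, h1⟩ := codingValue_mem_Icc fun i => hd (i + n)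
    rw [show codingValue r q d - y = (∏ j ∈ range n, r (d j)) *
        (codingValue r q (fun i => d (i + n)) - z n) by
      linear_combination codingValue_eq_add hd n - hy n, abs_mul, abs_of_nonneg hR]
    calc (∏ j ∈ range n, r (d j)) * |codingValue r q (fun i => d (i + n)) - z n|
        ≤ ∏ j ∈ range n, r (d j) :=
          mul_le_of_le_one_right hR (abs_sub_le_of_nonneg_of_le h0 h1 (hz n).1 (hz n).2)
      _ ≤ ∏ _j ∈ range n, c := prod_le_prod (fun j _ => (hd j).1) fun j _ => hc j
      _ = c ^ n := by rw [prod_const, card_range]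
  have hlim := tendsto_pow_atTop_nhds_zero_of_lt_one ((hd 0).1.trans (hc 0)) hc1
  exact sub_eq_zero.1 (abs_nonpos_iff.1 (ge_of_tendsto' hlim hclose))

theorem mul_prod_le_abs_codingValue_sub {D : Set ℕ} {δ : ℝ}
    (hD : ∀ k ∈ D, MapsUnitInterval r q k)
    (hsep : ∀ e e' : ℕ → ℕ, (∀ i, e i ∈ D) → (∀ i, e' i ∈ D) → e 0 ≠ e' 0 →
      δ ≤ |codingValue r q e - codingValue r q e'|)
    (hd : ∀ i, d i ∈ D) (hd' : ∀ i, d' i ∈ D) {n : ℕ} (h : ∀ j < n, d j = d' j)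
    (hn : d n ≠ d' n) :
    δ * ∏ j ∈ range n, r (d j) ≤ |codingValue r q d - codingValue r q d'| := by
  have hR : 0 ≤ ∏ j ∈ range n, r (d j) := prod_nonneg fun j _ => (hD _ (hd j)).1
  rw [codingValue_sub_eq (fun i => hD _ (hd i)) (fun i => hD _ (hd' i)) h, abs_mul,
    abs_of_nonneg hR, mul_comm]
  exact mul_le_mul_of_nonneg_left
    (hsep _ _ (fun i => hd _) (fun i => hd' _) (by simpa using hn)) hR

theorem volume_image_add_mul (a b : ℝ) (S : Set ℝ) :
    volume ((fun y => a + b * y) '' S) = ENNReal.ofReal |b| * volume S := by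
  have : (fun y => a + b * y) '' S = (fun y => a + y) '' (b • S) := by
    rw [← Set.image_smul, Set.image_image]
    rfl
  rw [this, Set.image_add_left, measure_preimage_add, Measure.addHaar_smul]
  simp

theorem volume_image_codingValue_eq_zero {D : Finset ℕ} (hD : ∀ k ∈ D, MapsUnitInterval r q k)
    (hlt : ∑ k ∈ D, r k < 1) :
    volume (codingValue r q '' {d | ∀ i, d i ∈ D}) = 0 := by
  set S := codingValue r q '' {d | ∀ i, d i ∈ D}
  have hself : S ⊆ ⋃ k ∈ D, (fun y => q k + r k * y) '' S := by
    rintro _ ⟨d, hd, rfl⟩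
    exact Set.mem_biUnion (hd 0) ⟨_, ⟨_, fun i => hd (i + 1), rfl⟩,
      (codingValue_eq_cons fun i => hD _ (hd i)).symm⟩
  have hle : volume S ≤ ENNReal.ofReal (∑ k ∈ D, r k) * volume S :=
    calc volume S ≤ ∑ k ∈ D, volume ((fun y => q k + r k * y) '' S) :=
          (measure_mono hself).trans (measure_biUnion_finset_le _ _)
      _ = ∑ k ∈ D, ENNReal.ofReal (r k) * volume S := sum_congr rfl fun k hk => by
          rw [volume_image_add_mul, abs_of_nonneg (hD k hk).1]
      _ = ENNReal.ofReal (∑ k ∈ D, r k) * volume S := by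
          rw [← sum_mul, ENNReal.ofReal_sum_of_nonneg fun k hk => (hD k hk).1]
  have hfin : volume S ≠ ⊤ := by
    refine ne_top_of_le_ne_top (b := volume (Set.Icc (0 : ℝ) 1)) (by simp) (measure_mono ?_)
    rintro _ ⟨d, hd, rfl⟩
    exact codingValue_mem_Icc fun i => hD _ (hd i)
  by_contra h0
  exact (ENNReal.mul_lt_mul_left h0 hfin (ENNReal.ofReal_lt_one.2 hlt)).not_ge (by simpa using hle)

end Coding

theorem dimH_image_le_of_edist_le {X Y Z : Type*} [EMetricSpace Y] [EMetricSpace Z]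
    {g : X → Y} {φ : X → Z} {s : Set X} {C r : ℝ≥0} (hr : 0 < r)
    (h : ∀ x ∈ s, ∀ y ∈ s, edist (φ x) (φ y) ≤ C * edist (g x) (g y) ^ (r : ℝ)) :
    dimH (φ '' s) ≤ dimH (g '' s) / r := by
  rcases s.eq_empty_or_nonempty with rfl | ⟨x₀, -⟩
  · simp
  have : Nonempty X := ⟨x₀⟩
  set f := φ ∘ Function.invFunOn g s
  have hinv {x : X} (hx : x ∈ s) :
      Function.invFunOn g s (g x) ∈ s ∧ g (Function.invFunOn g s (g x)) = g x :=
    ⟨Function.invFunOn_mem ⟨x, hx, rfl⟩, Function.invFunOn_eq ⟨x, hx, rfl⟩⟩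
  have hf : HolderOnWith C r f (g '' s) := by
    rintro _ ⟨x, hx, rfl⟩ _ ⟨y, hy, rfl⟩
    have := h _ (hinv hx).1 _ (hinv hy).1
    rwa [(hinv hx).2, (hinv hy).2] at this
  -- points with the same image under `g` have the same image under `φ`, by `h` at distance zero
  have himage : φ '' s ⊆ f '' (g '' s) := by
    rintro _ ⟨x, hx, rfl⟩
    refine ⟨g x, ⟨x, hx, rfl⟩, edist_eq_zero.1 (le_antisymm ?_ zero_le)⟩
    have := h _ (hinv hx).1 x hx
    rwa [(hinv hx).2, edist_self, ENNReal.zero_rpow_of_pos (by exact_mod_cast hr),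
      mul_zero] at this
  exact (dimH_mono himage).trans (hf.dimH_image_le hr)

theorem mapsUnitInterval_cumsum {p : ℕ → ℝ} {M k : ℕ} (hp : ∀ k ∈ Icc 1 M, 0 ≤ p k)
    (hsum : ∑ k ∈ Icc 1 M, p k = 1) (hk : k ∈ Icc 1 M) :
    MapsUnitInterval p (fun k => ∑ j ∈ Ico 1 k, p j) k := by
  obtain ⟨hk1, hkM⟩ := mem_Icc.1 hk
  refine ⟨hp k hk, sum_nonneg fun j hj => hp j (Ico_subset_Icc_self.trans
    (Icc_subset_Icc_right hkM) hj), ?_⟩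
  rw [← sum_Ico_succ_top hk1, Ico_add_one_right_eq_Icc, ← hsum]
  exact sum_le_sum_of_subset_of_nonneg (Icc_subset_Icc_right hkM) fun j hj _ => hp j hj

theorem exists_eq_sum_Ico_add_mul {p : ℕ → ℝ} {M : ℕ} (hp : ∀ k ∈ Icc 1 M, 0 < p k)
    (hsum : ∑ k ∈ Icc 1 M, p k = 1) {y : ℝ} (hy : y ∈ Set.Ico 0 1) :
    ∃ k ∈ Icc 1 M, ∃ y' ∈ Set.Ico (0 : ℝ) 1, y = ∑ j ∈ Ico 1 k, p j + p k * y' := by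
  classical
  have hM : 1 ≤ M := by
    by_contra! hM
    simp [Icc_eq_empty_of_lt hM] at hsum
  set k := Nat.findGreatest (fun k => ∑ j ∈ Ico 1 k, p j ≤ y) M
  have hy1 : ∑ j ∈ Ico 1 1, p j ≤ y := by simpa using hy.1
  have hk : k ∈ Icc 1 M := mem_Icc.2 ⟨Nat.le_findGreatest hM hy1, Nat.findGreatest_le M⟩
  have hle : ∑ j ∈ Ico 1 k, p j ≤ y :=
    Nat.findGreatest_spec (P := fun k => ∑ j ∈ Ico 1 k, p j ≤ y) hM hy1
  have hlt : y < ∑ j ∈ Ico 1 k, p j + p k := by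
    rw [← sum_Ico_succ_top (mem_Icc.1 hk).1]
    rcases (mem_Icc.1 hk).2.lt_or_eq with hkM | hkM
    · exact not_le.1 (Nat.findGreatest_is_greatest (Nat.lt_succ_self k) hkM)
    · rw [hkM, Ico_add_one_right_eq_Icc, hsum]
      exact hy.2
  have hpk := hp k hk
  refine ⟨k, hk, (y - ∑ j ∈ Ico 1 k, p j) / p k,
    ⟨div_nonneg (by linarith) hpk.le, (div_lt_one hpk).2 (by linarith)⟩, ?_⟩
  field_simp
  ring

theorem Ico_subset_image_codingValue {p : ℕ → ℝ} {M : ℕ}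
    (hp : ∀ k ∈ Icc 1 M, 0 < p k ∧ p k < 1) (hsum : ∑ k ∈ Icc 1 M, p k = 1) :
    Set.Ico 0 1 ⊆
      codingValue p (fun k => ∑ j ∈ Ico 1 k, p j) '' {d | ∀ i, d i ∈ Icc 1 M} := by
  intro y hy
  set q : ℕ → ℝ := fun k => ∑ j ∈ Ico 1 k, p j
  have hmaps (k : ℕ) (hk : k ∈ Icc 1 M) : MapsUnitInterval p q k :=
    mapsUnitInterval_cumsum (fun k hk => (hp k hk).1.le) hsum hk
  obtain ⟨kmax, hkmax, hmax⟩ := (Icc 1 M).exists_max_image p (by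
    by_contra! h
    simp [h] at hsum)
  have step (z : Set.Ico (0 : ℝ) 1) :
      ∃ k ∈ Icc 1 M, ∃ z' : Set.Ico (0 : ℝ) 1, (z : ℝ) = q k + p k * z' := by
    obtain ⟨k, hk, z', hz', h⟩ := exists_eq_sum_Ico_add_mul (fun k hk => (hp k hk).1) hsum z.2
    exact ⟨k, hk, ⟨z', hz'⟩, h⟩
  choose digit hdigit next hnext using step
  set orbit : ℕ → Set.Ico (0 : ℝ) 1 := fun n => next^[n] ⟨y, hy⟩
  set d : ℕ → ℕ := fun n => digit (orbit n)
  have hd (i : ℕ) : MapsUnitInterval p q (d i) := hmaps _ (hdigit _)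
  have hexpand (n : ℕ) :
      y = ∑ i ∈ range n, codingTerm p q d i + (∏ j ∈ range n, p (d j)) * orbit n := by
    induction n with
    | zero => simp [orbit]
    | succ n ih =>
      rw [ih, hnext (orbit n), sum_range_succ, prod_range_succ, codingTerm]
      simp only [orbit, d, Function.iterate_succ_apply']
      ring
  exact ⟨d, fun i => hdigit _, codingValue_eq_of_forall_eq_add hd (fun i => hmax _ (hdigit _))
    (hp _ hkmax).2 (fun n => Set.Ico_subset_Icc_self (orbit n).2) hexpand⟩

theorem abs_codingValue_sub_le_rpow {r q p q' : ℕ → ℝ} {D : Set ℕ} {s δ : ℝ} {d d' : ℕ → ℕ}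
    (hs : 0 < s) (hδ : 0 < δ) (hD : ∀ k ∈ D, MapsUnitInterval r q k)
    (hD' : ∀ k ∈ D, MapsUnitInterval p q' k) (hpr : ∀ k ∈ D, p k ≤ r k ^ s)
    (hsep : ∀ e e' : ℕ → ℕ, (∀ i, e i ∈ D) → (∀ i, e' i ∈ D) → e 0 ≠ e' 0 →
      δ ≤ |codingValue r q e - codingValue r q e'|)
    (hd : ∀ i, d i ∈ D) (hd' : ∀ i, d' i ∈ D) :
    |codingValue p q' d - codingValue p q' d'| ≤
      (δ⁻¹ * |codingValue r q d - codingValue r q d'|) ^ s := by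
  classical
  by_cases hdd : d = d'
  · subst hdd
    simp [Real.zero_rpow hs.ne']
  have hdiff : ∃ i, d i ≠ d' i := Function.ne_iff.1 hdd
  set n := Nat.find hdiff
  have hagree : ∀ j < n, d j = d' j := fun j hj => not_not.1 (Nat.find_min hdiff hj)
  calc |codingValue p q' d - codingValue p q' d'|
      ≤ ∏ j ∈ range n, p (d j) :=
        abs_codingValue_sub_le (fun i => hD' _ (hd i)) (fun i => hD' _ (hd' i)) hagree
    _ ≤ ∏ j ∈ range n, r (d j) ^ s :=
        prod_le_prod (fun j _ => (hD' _ (hd j)).1) fun j _ => hpr _ (hd j)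
    _ = (∏ j ∈ range n, r (d j)) ^ s :=
        Real.finsetProd_rpow _ _ (fun j _ => (hD _ (hd j)).1) s
    _ ≤ (δ⁻¹ * |codingValue r q d - codingValue r q d'|) ^ s := by
        refine Real.rpow_le_rpow (prod_nonneg fun j _ => (hD _ (hd j)).1) ?_ hs.le
        rw [le_inv_mul_iff₀ hδ]
        exact mul_prod_le_abs_codingValue_sub hD hsep hd hd' hagree (Nat.find_spec hdiff)

theorem le_dimH_image_codingValue {r q : ℕ → ℝ} {M : ℕ} {s : ℝ≥0} {δ : ℝ} (hs : 0 < s)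
    (hδ : 0 < δ) (hD : ∀ k ∈ Icc 1 M, MapsUnitInterval r q k)
    (hr : ∀ k ∈ Icc 1 M, 0 < r k ∧ r k < 1)
    (hsep : ∀ e e' : ℕ → ℕ, (∀ i, e i ∈ Icc 1 M) → (∀ i, e' i ∈ Icc 1 M) →
      e 0 ≠ e' 0 → δ ≤ |codingValue r q e - codingValue r q e'|)
    (hP : 1 ≤ ∑ k ∈ Icc 1 M, r k ^ (s : ℝ)) :
    (s : ℝ≥0∞) ≤ dimH (codingValue r q '' {d | ∀ i, d i ∈ Icc 1 M}) := by
  set P := ∑ k ∈ Icc 1 M, r k ^ (s : ℝ)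
  set p : ℕ → ℝ := fun k => r k ^ (s : ℝ) / P
  have hpr (k : ℕ) (hk : k ∈ Icc 1 M) : p k ≤ r k ^ (s : ℝ) :=
    div_le_self (Real.rpow_nonneg (hr k hk).1.le _) hP
  have hp (k : ℕ) (hk : k ∈ Icc 1 M) : 0 < p k ∧ p k < 1 :=
    ⟨div_pos (Real.rpow_pos_of_pos (hr k hk).1 _) (by linarith),
      (hpr k hk).trans_lt (Real.rpow_lt_one (hr k hk).1.le (hr k hk).2 (by exact_mod_cast hs))⟩
  have hsum : ∑ k ∈ Icc 1 M, p k = 1 := by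
    rw [← sum_div]
    exact div_self (by linarith)
  set Φ := codingValue p (fun k => ∑ j ∈ Ico 1 k, p j)
  have hholder : ∀ d ∈ {d : ℕ → ℕ | ∀ i, d i ∈ Icc 1 M},
      ∀ d' ∈ {d : ℕ → ℕ | ∀ i, d i ∈ Icc 1 M}, edist (Φ d) (Φ d') ≤
        (δ⁻¹ ^ (s : ℝ)).toNNReal * edist (codingValue r q d) (codingValue r q d') ^ (s : ℝ) := by
    intro d hd d' hd'
    have hδs : 0 ≤ δ⁻¹ ^ (s : ℝ) := Real.rpow_nonneg (inv_nonneg.2 hδ.le) _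
    rw [edist_dist, edist_dist, ENNReal.ofReal_rpow_of_nonneg dist_nonneg s.coe_nonneg]
    change _ ≤ ENNReal.ofReal _ * _
    rw [← ENNReal.ofReal_mul hδs]
    refine ENNReal.ofReal_le_ofReal ?_
    rw [Real.dist_eq, Real.dist_eq, ← Real.mul_rpow (inv_nonneg.2 hδ.le) (abs_nonneg _)]
    exact abs_codingValue_sub_le_rpow (by exact_mod_cast hs) hδ hD
      (fun k hk => mapsUnitInterval_cumsum (fun k hk => (hp k hk).1.le) hsum hk) hpr hsep hd hd'
  have hone : (1 : ℝ≥0∞) ≤ dimH (Φ '' {d | ∀ i, d i ∈ Icc 1 M}) := by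
    calc (1 : ℝ≥0∞) = dimH (Set.Ico (0 : ℝ) 1) := by
          rw [Real.dimH_of_nonempty_interior (by simp), Module.finrank_self, Nat.cast_one]
      _ ≤ _ := dimH_mono (Ico_subset_image_codingValue hp hsum)
  have hdim := hone.trans (dimH_image_le_of_edist_le hs hholder)
  rwa [ENNReal.le_div_iff_mul_le (by simp [hs.ne']) (by simp), one_mul] at hdim

section AlphaExpansion

variable {α : ℝ}

noncomputable def alphaScale (α : ℝ) (k : ℕ) : ℝ := (α - 1) / α ^ k

noncomputable def alphaOffset (α : ℝ) (k : ℕ) : ℝ := (α ^ k)⁻¹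

theorem alphaExpansion_eq_codingValue (hα : α ≠ 0) :
    alphaExpansion α = codingValue (alphaScale α) (alphaOffset α) := by
  funext d
  refine tsum_congr fun i => ?_
  simp only [codingTerm, alphaScale, alphaOffset]
  rw [prod_div_distrib, prod_const, card_range, prod_pow_eq_pow_sum, zpow_neg, zpow_natCast,
    sum_range_succ, pow_add]
  field_simp

theorem alphaOffset_succ_add_alphaScale_succ (hα : α ≠ 0) (k : ℕ) :
    alphaOffset α (k + 1) + alphaScale α (k + 1) = alphaOffset α k := by
  rw [alphaOffset, alphaOffset, alphaScale, pow_succ]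
  field_simp
  ring

theorem alphaOffset_pos (hα : 0 < α) (k : ℕ) : 0 < alphaOffset α k :=
  inv_pos.2 (pow_pos hα k)

theorem alphaScale_pos (hα : 1 < α) (k : ℕ) : 0 < alphaScale α k :=
  div_pos (by linarith) (pow_pos (by linarith) k)

theorem alphaOffset_antitone (hα : 1 ≤ α) : Antitone (alphaOffset α) := fun _ _ h =>
  inv_anti₀ (pow_pos (by linarith) _) (pow_le_pow_right₀ hα h)

theorem alphaScale_antitone (hα : 1 ≤ α) : Antitone (alphaScale α) := fun _ _ h =>
  div_le_div_of_nonneg_left (by linarith) (pow_pos (by linarith) _) (pow_le_pow_right₀ hα h)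

theorem mapsUnitInterval_alphaScale_alphaOffset (hα : 1 < α) {k : ℕ} (hk : 1 ≤ k) :
    MapsUnitInterval (alphaScale α) (alphaOffset α) k := by
  obtain ⟨m, rfl⟩ : ∃ m, k = m + 1 := ⟨k - 1, by omega⟩
  refine ⟨(alphaScale_pos hα _).le, (alphaOffset_pos (by linarith) _).le, ?_⟩
  rw [alphaOffset_succ_add_alphaScale_succ (zero_lt_one.trans hα).ne']
  exact inv_le_one_of_one_le₀ (one_le_pow₀ hα.le)

theorem sum_alphaScale (hα : α ≠ 0) (M : ℕ) :
    ∑ k ∈ Icc 1 M, alphaScale α k = 1 - alphaOffset α M := by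
  induction M with
  | zero => simp [alphaOffset]
  | succ M ih =>
    rw [sum_Icc_succ_top (by omega), ih, ← alphaOffset_succ_add_alphaScale_succ hα M]
    ring

theorem alphaScale_lt_one (hα : 1 < α) {k : ℕ} (hk : 1 ≤ k) : alphaScale α k < 1 := by
  linarith [(mapsUnitInterval_alphaScale_alphaOffset hα hk).2.2,
    alphaOffset_pos (zero_lt_one.trans hα) k]

theorem alphaOffset_le_codingValue (hα : 1 < α) {M : ℕ} {e : ℕ → ℕ}
    (he : ∀ i, e i ∈ Icc 1 M) :
    alphaOffset α M ≤ codingValue (alphaScale α) (alphaOffset α) e := by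
  have hmaps (i : ℕ) := mapsUnitInterval_alphaScale_alphaOffset hα (mem_Icc.1 (he i)).1
  rw [codingValue_eq_cons hmaps]
  have := mul_nonneg (hmaps 0).1 (codingValue_mem_Icc fun i => hmaps (i + 1)).1
  linarith [alphaOffset_antitone hα.le (mem_Icc.1 (he 0)).2]

theorem codingValue_alpha_add_le_of_lt (hα : 1 < α) {M : ℕ} {e e' : ℕ → ℕ}
    (he : ∀ i, e i ∈ Icc 1 M) (he' : ∀ i, e' i ∈ Icc 1 M) (hlt : e' 0 < e 0) :
    codingValue (alphaScale α) (alphaOffset α) e + alphaScale α M * alphaOffset α M ≤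
      codingValue (alphaScale α) (alphaOffset α) e' := by
  have hmaps {f : ℕ → ℕ} (hf : ∀ i, f i ∈ Icc 1 M) (i : ℕ) :=
    mapsUnitInterval_alphaScale_alphaOffset hα (mem_Icc.1 (hf i)).1
  obtain ⟨m, hm⟩ : ∃ m, e 0 = m + 1 := ⟨e 0 - 1, by omega⟩
  have hupper : codingValue (alphaScale α) (alphaOffset α) e ≤ alphaOffset α (e' 0) := by
    have htail := mul_le_of_le_one_right (hmaps he 0).1
      (codingValue_mem_Icc fun i => hmaps he (i + 1)).2
    rw [codingValue_eq_cons (hmaps he)]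
    rw [hm] at htail ⊢
    linarith [alphaOffset_succ_add_alphaScale_succ (zero_lt_one.trans hα).ne' m,
      alphaOffset_antitone hα.le (show e' 0 ≤ m by omega)]
  have hlower : alphaOffset α (e' 0) + alphaScale α M * alphaOffset α M ≤
      codingValue (alphaScale α) (alphaOffset α) e' := by
    rw [codingValue_eq_cons (hmaps he')]
    exact add_le_add_right (mul_le_mul (alphaScale_antitone hα.le (mem_Icc.1 (he' 0)).2)
      (alphaOffset_le_codingValue hα fun i => he' (i + 1))
      (alphaOffset_pos (by linarith) M).le (hmaps he' 0).1) _
  linarith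

theorem alphaScale_mul_alphaOffset_le_abs_codingValue_sub (hα : 1 < α) {M : ℕ} {e e' : ℕ → ℕ}
    (he : ∀ i, e i ∈ Icc 1 M) (he' : ∀ i, e' i ∈ Icc 1 M) (hne : e 0 ≠ e' 0) :
    alphaScale α M * alphaOffset α M ≤
      |codingValue (alphaScale α) (alphaOffset α) e -
        codingValue (alphaScale α) (alphaOffset α) e'| := by
  rcases hne.lt_or_gt with hlt | hlt
  · exact le_abs.2 (Or.inl (by linarith [codingValue_alpha_add_le_of_lt hα he' he hlt]))
  · exact le_abs.2 (Or.inr (by linarith [codingValue_alpha_add_le_of_lt hα he he' hlt]))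

/- The digit `k` contributes `alphaScale α k ^ s ≥ β * alphaScale α k` with `β > 1` when `s < 1`,
and the scales over `Icc 1 M` sum to `1 - α⁻ᴹ → 1`. -/
theorem exists_one_le_sum_alphaScale_rpow (hα : 1 < α) {s : ℝ} (hs : s < 1) :
    ∃ M, 1 ≤ ∑ k ∈ Icc 1 M, alphaScale α k ^ s := by
  set β := ((α - 1) / α) ^ (s - 1)
  have hβ : 1 < β := (Real.one_lt_rpow_iff_of_pos (div_pos (by linarith) (by linarith))).2
    (Or.inr ⟨(div_lt_one (by linarith)).2 (by linarith), by linarith⟩)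
  have hterm (k : ℕ) (hk : 1 ≤ k) : β * alphaScale α k ≤ alphaScale α k ^ s := by
    have hpos := alphaScale_pos hα k
    calc β * alphaScale α k ≤ alphaScale α k ^ (s - 1) * alphaScale α k := by
          gcongr
          exact Real.rpow_le_rpow_of_nonpos hpos
            (by simpa [alphaScale] using alphaScale_antitone hα.le hk) (by linarith)
      _ = alphaScale α k ^ s := by rw [Real.rpow_sub_one hpos.ne', div_mul_cancel₀ _ hpos.ne']
  have hlim : Filter.Tendsto (fun M => β * (1 - alphaOffset α M)) Filter.atTop (nhds β) := by
    simpa [alphaOffset] using ((tendsto_inv_atTop_zero.comp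
      (tendsto_pow_atTop_atTop_of_one_lt hα)).const_sub 1).const_mul β
  obtain ⟨M, hM⟩ := (hlim.eventually_const_lt hβ).exists
  refine ⟨M, hM.le.trans ?_⟩
  rw [← sum_alphaScale (zero_lt_one.trans hα).ne', mul_sum]
  exact sum_le_sum fun k hk => hterm k (mem_Icc.1 hk).1

theorem setOf_bounded_alphaExpansion_eq_iUnion (hα : α ≠ 0) :
    {x : ℝ | ∃ d : ℕ → ℕ,
        (∀ i, 1 ≤ d i) ∧ (∃ M : ℕ, ∀ i, d i ≤ M) ∧ alphaExpansion α d = x} =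
      ⋃ M : ℕ, codingValue (alphaScale α) (alphaOffset α) '' {d | ∀ i, d i ∈ Icc 1 M} := by
  ext x
  simp only [alphaExpansion_eq_codingValue hα, mem_Icc, Set.mem_iUnion, Set.mem_image,
    Set.mem_ofPred_eq, forall_and]
  exact ⟨fun ⟨d, h1, ⟨M, hM⟩, hx⟩ => ⟨M, d, ⟨h1, hM⟩, hx⟩,
    fun ⟨M, d, ⟨h1, hM⟩, hx⟩ => ⟨d, h1, ⟨M, hM⟩, hx⟩⟩

end AlphaExpansion

theorem bounded_digits_null_but_full_dimension (α : ℝ) (hα : 1 < α) :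
    volume {x : ℝ | ∃ d : ℕ → ℕ,
        (∀ i, 1 ≤ d i) ∧ (∃ M : ℕ, ∀ i, d i ≤ M) ∧ alphaExpansion α d = x} = 0 ∧
    dimH {x : ℝ | ∃ d : ℕ → ℕ,
        (∀ i, 1 ≤ d i) ∧ (∃ M : ℕ, ∀ i, d i ≤ M) ∧ alphaExpansion α d = x} = 1 := by
  have hmaps (M : ℕ) (k : ℕ) (hk : k ∈ Icc 1 M) :
      MapsUnitInterval (alphaScale α) (alphaOffset α) k :=
    mapsUnitInterval_alphaScale_alphaOffset hα (mem_Icc.1 hk).1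
  rw [setOf_bounded_alphaExpansion_eq_iUnion (zero_lt_one.trans hα).ne']
  refine ⟨measure_iUnion_null fun M => volume_image_codingValue_eq_zero (hmaps M) ?_,
    le_antisymm ((dimH_mono (Set.subset_univ _)).trans_eq Real.dimH_univ) ?_⟩
  · rw [sum_alphaScale (zero_lt_one.trans hα).ne']
    linarith [alphaOffset_pos (zero_lt_one.trans hα) M]
  refine ENNReal.le_of_forall_nnreal_lt fun s hs => ?_
  rcases eq_zero_or_pos s with rfl | hs0
  · simp
  obtain ⟨M, hM⟩ := exists_one_le_sum_alphaScale_rpow hα (s := s) (by exact_mod_cast hs)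
  refine (le_dimH_image_codingValue hs0 ?_ (hmaps M) ?_
    (fun e e' he he' => alphaScale_mul_alphaOffset_le_abs_codingValue_sub hα he he') hM).trans
    (dimH_mono (Set.subset_iUnion_of_subset M subset_rfl))
  · exact mul_pos (alphaScale_pos hα M) (alphaOffset_pos (zero_lt_one.trans hα) M)
  · exact fun k hk => ⟨alphaScale_pos hα k, alphaScale_lt_one hα (mem_Icc.1 hk).1⟩
end
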